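/- arXiv:1109.4930 — 10 statements merged into one kernel-verified Lean document; each statement's English description precedes it below -/
import Mathlib

section
/- If the metric d on X is unbounded, then for every choice of the constant M>0 the function d_E fails the triangle inequality (hence is not a metric on E), and likewise d_Em fails the triangle inequality for every M>0. -/
/-- `ρ` is a metric: zero iff equal, symmetric, triangle inequality. -/
def IsMetric {α : Type*} (ρ : α → α → ℝ) : Prop :=
  (∀ x y, ρ x y = 0 ↔ x = y) ∧ (∀ x y, ρ x y = ρ y x) ∧
    ∀ x y z, ρ x z ≤ ρ x y + ρ y z

def IsCauchyWith {α : Type*} (ρ : α → α → ℝ) (S : ℕ → α) : Prop :=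
  ∀ ε : ℝ, 0 < ε → ∃ N : ℕ, ∀ m ≥ N, ∀ n ≥ N, ρ (S m) (S n) < ε

def TendsToWith {α : Type*} (ρ : α → α → ℝ) (S : ℕ → α) (l : α) : Prop :=
  ∀ ε : ℝ, 0 < ε → ∃ N : ℕ, ∀ n ≥ N, ρ (S n) l < ε

def IsCompleteWith {α : Type*} (ρ : α → α → ℝ) : Prop :=
  ∀ S : ℕ → α, IsCauchyWith ρ S → ∃ l, TendsToWith ρ S l

/-- the topology generated by the open balls of `ρ` -/
def topOf {α : Type*} (ρ : α → α → ℝ) : TopologicalSpace α :=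
  TopologicalSpace.generateFrom {s | ∃ (x : α) (ε : ℝ), s = {y | ρ x y < ε}}

/-- `sup d`, the supremum of all distances in `X` -/
noncomputable def supD (X : Type*) [MetricSpace X] : ℝ :=
  sSup {r : ℝ | ∃ x y : X, dist x y = r}

/-- The multiset distance `d_E`: enumerate `a` and `c` with multiplicity in all possible
orders; the shorter enumeration is matched against an initial part of the other, taking
the sum of the distances of matched pairs plus the notional part `M * |C(c) - C(a)|`;
`d_E` is the least such value. -/
noncomputable def dE {X : Type*} [MetricSpace X] (M : ℝ) (a c : Multiset X) : ℝ :=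
  sInf {r : ℝ | ∃ la lc : List X, (la : Multiset X) = a ∧ (lc : Multiset X) = c ∧
    r = (List.zipWith dist la lc).sum + M * |(c.card : ℝ) - (a.card : ℝ)|}

/-- `d_Em`, the mean version of `d_E` (equal to `0` on the pair of empty multisets). -/
noncomputable def dEm {X : Type*} [MetricSpace X] (M : ℝ) (a c : Multiset X) : ℝ :=
  dE M a c / (max a.card c.card : ℕ)



lemma dE_single {X : Type*} [MetricSpace X] (M : ℝ) (x y : X) :
    dE M {x} {y} = dist x y := by
  unfold dE
  have : {r : ℝ | ∃ la lc : List X, (la : Multiset X) = {x} ∧ (lc : Multiset X) = {y} ∧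
      r = (List.zipWith dist la lc).sum + M * |(({y} : Multiset X).card : ℝ) -
        (({x} : Multiset X).card : ℝ)|} = {dist x y} := by
    ext r
    constructor
    · rintro ⟨la, lc, ha, hc, rfl⟩
      have hla : la = [x] := by
        have := (Multiset.coe_eq_coe (l₁ := la) (l₂ := [x])).1 (by simpa using ha)
        simpa [List.perm_singleton] using this
      have hlc : lc = [y] := by
        have := (Multiset.coe_eq_coe (l₁ := lc) (l₂ := [y])).1 (by simpa using hc)
        simpa [List.perm_singleton] using this
      subst hla hlc
      simp
    · rintro rfl
      exact ⟨[x], [y], by simp, by simp, by simp⟩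
  rw [this, csInf_singleton]

lemma dE_single_zero {X : Type*} [MetricSpace X] (M : ℝ) (x : X) :
    dE M {x} 0 = M := by
  unfold dE
  have : {r : ℝ | ∃ la lc : List X, (la : Multiset X) = {x} ∧ (lc : Multiset X) = 0 ∧
      r = (List.zipWith dist la lc).sum + M * |((0 : Multiset X).card : ℝ) -
        (({x} : Multiset X).card : ℝ)|} = {M} := by
    ext r
    constructor
    · rintro ⟨la, lc, ha, hc, rfl⟩
      have hlc : lc = [] := by simpa using hc
      subst hlc
      simp
    · rintro rfl
      exact ⟨[x], [], by simp, by simp, by simp⟩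
  rw [this, csInf_singleton]

lemma dE_zero_single {X : Type*} [MetricSpace X] (M : ℝ) (y : X) :
    dE M 0 {y} = M := by
  unfold dE
  have : {r : ℝ | ∃ la lc : List X, (la : Multiset X) = 0 ∧ (lc : Multiset X) = {y} ∧
      r = (List.zipWith dist la lc).sum + M * |(({y} : Multiset X).card : ℝ) -
        ((0 : Multiset X).card : ℝ)|} = {M} := by
    ext r
    constructor
    · rintro ⟨la, lc, ha, hc, rfl⟩
      have hla : la = [] := by simpa using ha
      subst hla
      simp
    · rintro rfl
      exact ⟨[], [y], by simp, by simp, by simp⟩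
  rw [this, csInf_singleton]

/-- If the metric on `X` is unbounded then for every `M > 0` both `d_E` and `d_Em`
fail the triangle inequality (hence are not metrics on `E`). -/
theorem stmt_0 {X : Type*} [MetricSpace X] [Nontrivial X]
    (hunb : ¬ ∃ B : ℝ, ∀ x y : X, dist x y ≤ B) (M : ℝ) (hM : 0 < M) :
    (¬ ∀ a b c : Multiset X, dE M a c ≤ dE M a b + dE M b c) ∧
    (¬ ∀ a b c : Multiset X, dEm M a c ≤ dEm M a b + dEm M b c) := by
  push_neg at hunb
  obtain ⟨x, y, hxy⟩ := hunb (2 * M)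
  have h1 : dE M {x} ({y} : Multiset X) = dist x y := dE_single M x y
  have h2 : dE M {x} (0 : Multiset X) = M := dE_single_zero M x
  have h3 : dE M (0 : Multiset X) {y} = M := dE_zero_single M y
  constructor
  · intro h
    have := h {x} 0 {y}
    rw [h1, h2, h3] at this
    linarith
  · intro h
    have := h {x} 0 {y}
    unfold dEm at this
    rw [h1, h2, h3] at this
    simp at this
    linarith
end

section
/- Suppose the metric d on X is bounded. Then d_E is a metric on E if and only if θ = (sup d)/M ≤ 2. -/
section Matching

variable {X : Type*} [PseudoMetricSpace X]

def matchCost (M : ℝ) : List X → List X → ℝ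
  | [], [] => 0
  | _ :: a, [] => M + matchCost M a []
  | [], _ :: c => M + matchCost M [] c
  | x :: a, y :: c => dist x y + matchCost M a c

theorem matchCost_eq (M : ℝ) (la lc : List X) :
    matchCost M la lc =
      (List.zipWith dist la lc).sum + M * |(lc.length : ℝ) - (la.length : ℝ)| := by
  fun_induction matchCost M la lc with
  | case1 => simp
  | case2 _ a ih | case3 _ a ih =>
    simp only [ih, List.zipWith_nil_left, List.zipWith_nil_right, List.sum_nil, List.length_nil,
      List.length_cons, Nat.cast_zero, zero_sub, sub_zero, abs_neg, Nat.abs_cast]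
    push_cast; ring
  | case4 x a y c ih =>
    simp only [ih, List.zipWith_cons_cons, List.sum_cons, List.length_cons, Nat.cast_add,
      Nat.cast_one, add_sub_add_right_eq_sub]
    ring

theorem matchCost_nonneg {M : ℝ} (hM : 0 ≤ M) (la lc : List X) : 0 ≤ matchCost M la lc := by
  fun_induction matchCost M la lc with
  | case1 => exact le_rfl
  | case2 _ _ ih | case3 _ _ ih => exact add_nonneg hM ih
  | case4 _ _ _ _ ih => exact add_nonneg dist_nonneg ih

theorem matchCost_self (M : ℝ) (l : List X) : matchCost M l l = 0 := by
  induction l <;> simp [matchCost, *]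

theorem matchCost_comm (M : ℝ) (la lc : List X) : matchCost M la lc = matchCost M lc la := by
  fun_induction matchCost M la lc <;> simp [matchCost, dist_comm, *]

theorem matchCost_append_singleton_le {M : ℝ} (h2M : ∀ u v : X, dist u v ≤ 2 * M)
    (la lc : List X) (x : X) : matchCost M (la ++ [x]) lc ≤ matchCost M la lc + M := by
  fun_induction matchCost M la lc with
  | case1 => simp [matchCost]
  | case2 _ a ih => simp only [List.cons_append, matchCost]; linarith
  | case3 y c =>
    have : matchCost M [] c = M * c.length := by simp [matchCost_eq]
    simp only [List.nil_append, matchCost]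
    linarith [h2M x y]
  | case4 x' a y c ih => simp only [List.cons_append, matchCost]; linarith

def optDist (M : ℝ) : Option X → Option X → ℝ
  | some x, some y => dist x y
  | none, none => 0
  | _, _ => M

theorem optDist_triangle {M : ℝ} (h2M : ∀ x y : X, dist x y ≤ 2 * M) (u v w : Option X) :
    optDist M u w ≤ optDist M u v + optDist M v w := by
  rcases u with _ | x <;> rcases v with _ | y <;> rcases w with _ | z <;> simp only [optDist]
  · simp
  · simp
  · linarith [h2M y y, dist_self y]
  · exact le_add_of_nonneg_right dist_nonneg
  · simp
  · linarith [h2M x z]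
  · exact le_add_of_nonneg_left dist_nonneg
  · exact dist_triangle x y z

def padNone {α : Type*} (l : List α) (k : ℕ) : List (Option α) :=
  l.map some ++ List.replicate k none

theorem length_padNone {α : Type*} (l : List α) (k : ℕ) :
    (padNone l k).length = l.length + k := by
  simp [padNone]

theorem reduceOption_padNone {α : Type*} (l : List α) (k : ℕ) :
    (padNone l k).reduceOption = l := by
  simp [padNone, List.reduceOption, List.filterMap_map]

theorem padNone_cons {α : Type*} (x : α) (l : List α) (k : ℕ) :
    padNone (x :: l) k = some x :: padNone l k := rfl

theorem padNone_nil_succ {α : Type*} (k : ℕ) :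
    padNone ([] : List α) (k + 1) = none :: padNone [] k := rfl

theorem sum_zipWith_optDist_padNone (M : ℝ) (la lc : List X) {k l : ℕ}
    (h : la.length + k = lc.length + l) :
    (List.zipWith (optDist M) (padNone la k) (padNone lc l)).sum = matchCost M la lc := by
  fun_induction matchCost M la lc generalizing k l with
  | case1 =>
    obtain rfl : k = l := by simpa using h
    simp [padNone, optDist]
  | case2 x a ih =>
    obtain ⟨l, rfl⟩ : ∃ l', l = l' + 1 := ⟨l - 1, by simp at h; omega⟩
    simp only [padNone_cons, padNone_nil_succ, List.zipWith_cons_cons, List.sum_cons, optDist,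
      ih (k := k) (l := l) (by simp at h ⊢; omega)]
  | case3 y c ih =>
    obtain ⟨k, rfl⟩ : ∃ k', k = k' + 1 := ⟨k - 1, by simp at h; omega⟩
    simp only [padNone_cons, padNone_nil_succ, List.zipWith_cons_cons, List.sum_cons, optDist,
      ih (k := k) (l := l) (by simp at h ⊢; omega)]
  | case4 x a y c ih =>
    simp only [padNone_cons, List.zipWith_cons_cons, List.sum_cons, optDist,
      ih (k := k) (l := l) (by simp at h; omega)]

end Matching

theorem List.Perm.exists_perm_zipWith {α β γ : Type*} (f : α → β → γ) {l₁ l₂ : List α}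
    (h : l₁.Perm l₂) {m₁ : List β} (hm : m₁.length = l₁.length) :
    ∃ m₂ : List β, m₂.Perm m₁ ∧ (List.zipWith f l₂ m₂).Perm (List.zipWith f l₁ m₁) := by
  induction h generalizing m₁ with
  | nil => exact ⟨m₁, .refl _, .refl _⟩
  | cons x _ ih =>
    obtain _ | ⟨b, m⟩ := m₁
    · simp at hm
    obtain ⟨m', hp, hz⟩ := ih (m₁ := m) (by simpa using hm)
    exact ⟨b :: m', hp.cons b, hz.cons _⟩
  | swap x y l =>
    obtain _ | ⟨b, _ | ⟨b', m⟩⟩ := m₁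
    · simp at hm
    · simp at hm
    exact ⟨b' :: b :: m, .swap b b' m, .swap _ _ _⟩
  | trans h₁₂ _ ih₁₂ ih₂₃ =>
    obtain ⟨m₂, hp₂, hz₂⟩ := ih₁₂ hm
    obtain ⟨m₃, hp₃, hz₃⟩ := ih₂₃ (m₁ := m₂) (by rw [hp₂.length_eq, hm, h₁₂.length_eq])
    exact ⟨m₃, hp₃.trans hp₂, hz₃.trans hz₂⟩

theorem List.sum_zipWith_le_add {α : Type*} {f : α → α → ℝ}
    (hf : ∀ u v w, f u w ≤ f u v + f v w) :
    ∀ {A B C : List α}, A.length = B.length → B.length = C.length →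
      (List.zipWith f A C).sum ≤ (List.zipWith f A B).sum + (List.zipWith f B C).sum
  | [], [], [], _, _ => by simp
  | u :: A, v :: B, w :: C, hAB, hBC => by
    simp only [List.zipWith_cons_cons, List.sum_cons]
    linarith [hf u v w, List.sum_zipWith_le_add hf (A := A) (B := B) (C := C)
      (by simpa using hAB) (by simpa using hBC)]

section MultisetDist

variable {X : Type*} [MetricSpace X]

theorem eq_of_matchCost_eq_zero {M : ℝ} (hM : 0 < M) {la lc : List X}
    (h : matchCost M la lc = 0) : la = lc := by
  fun_induction matchCost M la lc with
  | case1 => rfl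
  | case2 _ a ih => linarith [matchCost_nonneg hM.le a []]
  | case3 _ c ih => linarith [matchCost_nonneg hM.le [] c]
  | case4 x a y c ih =>
    have hd := dist_nonneg (x := x) (y := y)
    have hc := matchCost_nonneg hM.le a c
    have hxy : x = y := dist_eq_zero.mp (by linarith)
    rw [hxy, ih (by linarith)]

def matchCosts (M : ℝ) (a c : Multiset X) : Set ℝ :=
  {r | ∃ la lc : List X, (la : Multiset X) = a ∧ (lc : Multiset X) = c ∧ r = matchCost M la lc}

theorem dE_eq_sInf_matchCosts (M : ℝ) (a c : Multiset X) :
    dE M a c = sInf (matchCosts M a c) := by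
  unfold dE matchCosts
  congr 1
  ext r
  constructor <;> rintro ⟨la, lc, rfl, rfl, rfl⟩ <;>
    exact ⟨la, lc, rfl, rfl, by simp [matchCost_eq]⟩

theorem matchCosts_finite (M : ℝ) (a c : Multiset X) : (matchCosts M a c).Finite := by
  refine ((a.toList.permutations.finite_toSet.prod c.toList.permutations.finite_toSet).image
    fun p => matchCost M p.1 p.2).subset ?_
  rintro r ⟨la, lc, rfl, rfl, rfl⟩
  exact ⟨(la, lc),
    ⟨List.mem_permutations.mpr (Multiset.coe_eq_coe.mp (Multiset.coe_toList _).symm),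
      List.mem_permutations.mpr (Multiset.coe_eq_coe.mp (Multiset.coe_toList _).symm)⟩, rfl⟩

theorem exists_dE_eq_matchCost (M : ℝ) (a c : Multiset X) :
    ∃ la lc : List X, (la : Multiset X) = a ∧ (lc : Multiset X) = c ∧
      dE M a c = matchCost M la lc := by
  rw [dE_eq_sInf_matchCosts]
  exact Set.Nonempty.csInf_mem (s := matchCosts M a c)
    ⟨_, a.toList, c.toList, a.coe_toList, c.coe_toList, rfl⟩ (matchCosts_finite M a c)

theorem dE_le_matchCost (M : ℝ) (la lc : List X) :
    dE M (la : Multiset X) lc ≤ matchCost M la lc := by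
  rw [dE_eq_sInf_matchCosts]
  exact csInf_le (matchCosts_finite M _ _).bddBelow ⟨la, lc, rfl, rfl, rfl⟩

theorem dE_nonneg {M : ℝ} (hM : 0 ≤ M) (a c : Multiset X) : 0 ≤ dE M a c := by
  obtain ⟨la, lc, -, -, h⟩ := exists_dE_eq_matchCost M a c
  exact h ▸ matchCost_nonneg hM la lc

theorem dE_self {M : ℝ} (hM : 0 ≤ M) (a : Multiset X) : dE M a a = 0 := by
  refine le_antisymm ?_ (dE_nonneg hM a a)
  simpa [matchCost_self] using dE_le_matchCost M a.toList a.toList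

theorem dE_comm (M : ℝ) (a c : Multiset X) : dE M a c = dE M c a := by
  simp only [dE_eq_sInf_matchCosts, matchCosts]
  congr 1
  ext r
  exact ⟨fun ⟨la, lc, ha, hc, h⟩ => ⟨lc, la, hc, ha, h.trans (matchCost_comm M la lc)⟩,
    fun ⟨lc, la, hc, ha, h⟩ => ⟨la, lc, ha, hc, h.trans (matchCost_comm M lc la)⟩⟩

theorem eq_of_dE_eq_zero {M : ℝ} (hM : 0 < M) {a c : Multiset X} (h : dE M a c = 0) :
    a = c := by
  obtain ⟨la, lc, rfl, rfl, hd⟩ := exists_dE_eq_matchCost M a c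
  exact congrArg _ (eq_of_matchCost_eq_zero hM (hd ▸ h))

theorem dE_singleton_zero (M : ℝ) (x : X) : dE M {x} 0 = M := by
  obtain ⟨la, lc, ha, hc, hd⟩ := exists_dE_eq_matchCost M {x} 0
  rw [Multiset.coe_eq_singleton] at ha
  rw [Multiset.coe_eq_zero] at hc
  simp [hd, ha, hc, matchCost]

theorem dE_singleton_singleton (M : ℝ) (x y : X) : dE M {x} {y} = dist x y := by
  obtain ⟨la, lc, ha, hc, hd⟩ := exists_dE_eq_matchCost M {x} {y}
  rw [Multiset.coe_eq_singleton] at ha hc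
  simp [hd, ha, hc, matchCost]

theorem dE_cons_left_le {M : ℝ} (h2M : ∀ u v : X, dist u v ≤ 2 * M) (x : X)
    (a c : Multiset X) : dE M (x ::ₘ a) c ≤ dE M a c + M := by
  obtain ⟨la, lc, rfl, rfl, hd⟩ := exists_dE_eq_matchCost M a c
  calc dE M (x ::ₘ (la : Multiset X)) lc = dE M ((la ++ [x] : List X) : Multiset X) lc := by
        rw [Multiset.cons_coe, Multiset.coe_eq_coe.mpr (List.perm_append_singleton x la)]
    _ ≤ matchCost M (la ++ [x]) lc := dE_le_matchCost M _ _
    _ ≤ dE M (la : Multiset X) lc + M := hd ▸ matchCost_append_singleton_le h2M la lc x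

theorem dE_cons_right_le {M : ℝ} (h2M : ∀ u v : X, dist u v ≤ 2 * M) (y : X)
    (a c : Multiset X) : dE M a (y ::ₘ c) ≤ dE M a c + M := by
  rw [dE_comm, dE_comm M a]
  exact dE_cons_left_le h2M y c a

theorem dE_cons_cons_le (M : ℝ) (x y : X) (a c : Multiset X) :
    dE M (x ::ₘ a) (y ::ₘ c) ≤ dist x y + dE M a c := by
  obtain ⟨la, lc, rfl, rfl, hd⟩ := exists_dE_eq_matchCost M a c
  rw [hd, Multiset.cons_coe, Multiset.cons_coe]
  simpa [matchCost] using dE_le_matchCost M (x :: la) (y :: lc)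

theorem dE_reduceOption_le_sum_optDist {M : ℝ} (hM : 0 ≤ M)
    (h2M : ∀ x y : X, dist x y ≤ 2 * M) :
    ∀ {A C : List (Option X)}, A.length = C.length →
      dE M (A.reduceOption : Multiset X) C.reduceOption ≤ (List.zipWith (optDist M) A C).sum
  | [], [], _ => by simp [dE_self hM]
  | u :: A, v :: C, h => by
    have ih := dE_reduceOption_le_sum_optDist hM h2M (A := A) (C := C) (by simpa using h)
    rcases u with _ | x <;> rcases v with _ | y <;>
      simp only [List.reduceOption_cons_of_none, List.reduceOption_cons_of_some,
        ← Multiset.cons_coe, List.zipWith_cons_cons, List.sum_cons, optDist, zero_add]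
    · exact ih
    · linarith [dE_cons_right_le h2M y (A.reduceOption : Multiset X) C.reduceOption]
    · linarith [dE_cons_left_le h2M x (A.reduceOption : Multiset X) C.reduceOption]
    · linarith [dE_cons_cons_le M x y (A.reduceOption : Multiset X) C.reduceOption]

theorem dE_triangle {M : ℝ} (hM : 0 ≤ M) (h2M : ∀ x y : X, dist x y ≤ 2 * M)
    (a b c : Multiset X) : dE M a c ≤ dE M a b + dE M b c := by
  obtain ⟨la, lb, rfl, rfl, hab⟩ := exists_dE_eq_matchCost M a b
  obtain ⟨lb', lc, hb', rfl, hbc⟩ := exists_dE_eq_matchCost M lb c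
  have hperm : lb'.Perm lb := Multiset.coe_eq_coe.mp hb'
  have hlen := hperm.length_eq
  set N := la.length + lb.length + lc.length
  set A := padNone la (N - la.length)
  set B := padNone lb (N - lb.length)
  set B' := padNone lb' (N - lb.length)
  have hA : A.length = N := by simp only [A, length_padNone]; omega
  have hB : B.length = N := by simp only [B, length_padNone]; omega
  have hB' : B'.length = N := by simp only [B', length_padNone]; omega
  have hBB' : B'.Perm B := (hperm.map some).append_right _
  obtain ⟨C, hC, hsum⟩ := hBB'.exists_perm_zipWith (optDist M) (m₁ := padNone lc (N - lc.length))
    (by rw [hB', length_padNone]; omega)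
  have hCN : C.length = N := by rw [hC.length_eq, length_padNone]; omega
  have hCc : (C.reduceOption : Multiset X) = lc :=
    (Multiset.coe_eq_coe.mpr (hC.filterMap id)).trans (congrArg _ (reduceOption_padNone lc _))
  calc dE M (la : Multiset X) lc = dE M (A.reduceOption : Multiset X) C.reduceOption := by
        rw [reduceOption_padNone, hCc]
    _ ≤ (List.zipWith (optDist M) A C).sum :=
        dE_reduceOption_le_sum_optDist hM h2M (hA.trans hCN.symm)
    _ ≤ (List.zipWith (optDist M) A B).sum + (List.zipWith (optDist M) B C).sum :=
        List.sum_zipWith_le_add (optDist_triangle h2M) (hA.trans hB.symm) (hB.trans hCN.symm)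
    _ = matchCost M la lb + matchCost M lb' lc := by
        rw [hsum.sum_eq, sum_zipWith_optDist_padNone, sum_zipWith_optDist_padNone] <;> omega
    _ = dE M (la : Multiset X) lb + dE M (lb : Multiset X) lc := by rw [hab, hbc]

theorem isMetric_dE {M : ℝ} (hM : 0 < M) (h2M : ∀ x y : X, dist x y ≤ 2 * M) :
    IsMetric (dE (X := X) M) :=
  ⟨fun _ _ => ⟨eq_of_dE_eq_zero hM, fun h => h ▸ dE_self hM.le _⟩, dE_comm M,
    dE_triangle hM.le h2M⟩

theorem dist_le_two_mul_of_isMetric_dE {M : ℝ} (h : IsMetric (dE (X := X) M)) (x y : X) :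
    dist x y ≤ 2 * M := by
  have htri := h.2.2 {x} 0 {y}
  rw [dE_singleton_singleton, dE_singleton_zero, h.2.1 0, dE_singleton_zero] at htri
  linarith

theorem supD_le_iff (hbdd : ∃ B : ℝ, ∀ x y : X, dist x y ≤ B) {r : ℝ} (hr : 0 ≤ r) :
    supD X ≤ r ↔ ∀ x y : X, dist x y ≤ r := by
  obtain ⟨B, hB⟩ := hbdd
  have hbdd' : BddAbove {r : ℝ | ∃ x y : X, dist x y = r} :=
    ⟨B, by rintro _ ⟨x, y, rfl⟩; exact hB x y⟩
  exact ⟨fun h x y => (le_csSup hbdd' ⟨x, y, rfl⟩).trans h,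
    fun h => Real.sSup_le (by rintro _ ⟨x, y, rfl⟩; exact h x y) hr⟩

end MultisetDist

theorem stmt_1_general {X : Type*} [MetricSpace X] (M : ℝ) (hM : 0 < M)
    (hbdd : ∃ B : ℝ, ∀ x y : X, dist x y ≤ B) :
    IsMetric (dE (X := X) M) ↔ supD X / M ≤ 2 := by
  rw [div_le_iff₀ hM, supD_le_iff hbdd (by positivity)]
  exact ⟨dist_le_two_mul_of_isMetric_dE, isMetric_dE hM⟩

/-- If `d` is bounded then `d_E` is a metric on `E` iff `(sup d)/M ≤ 2`. -/
theorem stmt_1 {X : Type*} [MetricSpace X] [Nontrivial X] (M : ℝ) (hM : 0 < M)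
    (hbdd : ∃ B : ℝ, ∀ x y : X, dist x y ≤ B) :
    IsMetric (dE (X := X) M) ↔ supD X / M ≤ 2 :=
  stmt_1_general M hM hbdd
end

section
/- For all multisets a and c on X, d_E(a,c) = d_E(a_c, c_a); that is, d_E is unchanged when a and c are replaced by their multiset differences a − a∩c and c − a∩c. -/
/-!
A point `x` lying in both `a` and `c` can be removed from both without changing `d_E`.
Adding `x` to both sides of a matching as a matched pair costs nothing. Conversely, in any
enumeration of `x ::ₘ a` and `x ::ₘ c`, if the two copies of `x` are matched to `p` and `q`
instead of to each other, then matching `p` with `q` directly is no more expensive, by the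
triangle inequality `d(p, q) ≤ d(p, x) + d(x, q)`; if one copy of `x` is unmatched, its
partner takes its place among the unmatched points. Removing the common part `a ∩ c` one point
at a time gives the theorem.
-/

theorem List.replace_perm_cons_erase {α : Type*} [BEq α] [LawfulBEq α] {x : α} {l : List α}
    (y : α) (hx : x ∈ l) :
    (l.replace x y).Perm (y :: l.erase x) := by
  induction l with
  | nil => simp at hx
  | cons z t ih =>
    by_cases hzx : z = x
    · subst hzx; simp
    · have hxt : x ∈ t := (List.mem_cons.mp hx).resolve_left (Ne.symm hzx)
      simp only [List.replace_cons, beq_eq_false_iff_ne.mpr (Ne.symm hzx),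
        List.erase_cons_tail (a := x) (b := z) (l := t) (by simpa using hzx)]
      exact ((ih hxt).cons z).trans (List.Perm.swap y z _)

namespace DE

variable {X : Type*} [MetricSpace X]

theorem zipWith_dist_sum_nonneg (la lc : List X) : 0 ≤ (List.zipWith dist la lc).sum := by
  induction la generalizing lc with
  | nil => simp
  | cons p ta ih =>
    cases lc with
    | nil => simp
    | cons q tc => simpa using add_nonneg dist_nonneg (ih tc)

theorem zipWith_dist_sum_comm (la lc : List X) :
    (List.zipWith dist la lc).sum = (List.zipWith dist lc la).sum := by
  rw [List.zipWith_comm_of_comm dist_comm]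

def matchingCosts (M : ℝ) (a c : Multiset X) : Set ℝ :=
  {r : ℝ | ∃ la lc : List X, (la : Multiset X) = a ∧ (lc : Multiset X) = c ∧
    r = (List.zipWith dist la lc).sum + M * |(c.card : ℝ) - (a.card : ℝ)|}

theorem dE_eq_sInf_matchingCosts (M : ℝ) (a c : Multiset X) :
    dE M a c = sInf (matchingCosts M a c) := rfl

theorem matchingCosts_nonempty (M : ℝ) (a c : Multiset X) : (matchingCosts M a c).Nonempty :=
  ⟨_, a.toList, c.toList, a.coe_toList, c.coe_toList, rfl⟩

theorem bddBelow_matchingCosts (M : ℝ) (a c : Multiset X) : BddBelow (matchingCosts M a c) := by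
  refine ⟨M * |(c.card : ℝ) - (a.card : ℝ)|, ?_⟩
  rintro _ ⟨la, lc, -, -, rfl⟩
  linarith [zipWith_dist_sum_nonneg la lc]

section DecidableEq

variable [DecidableEq X]

theorem zipWith_dist_replace_le (la lc : List X) (x y : X) :
    (List.zipWith dist la (lc.replace x y)).sum ≤ dist x y + (List.zipWith dist la lc).sum := by
  induction la generalizing lc with
  | nil => simp
  | cons p ta ih =>
    cases lc with
    | nil => simp
    | cons q tc =>
      by_cases hqx : q = x
      · subst hqx
        simp only [List.replace_cons_self, List.zipWith_cons_cons, List.sum_cons]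
        linarith [dist_triangle p q y]
      · simp only [List.replace_cons, beq_eq_false_iff_ne.mpr (Ne.symm hqx),
          List.zipWith_cons_cons, List.sum_cons]
        linarith [ih tc]

theorem exists_perm_erase_zipWith_dist_le {x : X} {la lc : List X} (ha : x ∈ la) (hc : x ∈ lc) :
    ∃ la' lc' : List X, la'.Perm (la.erase x) ∧ lc'.Perm (lc.erase x) ∧
      (List.zipWith dist la' lc').sum ≤ (List.zipWith dist la lc).sum := by
  induction la generalizing lc with
  | nil => simp at ha
  | cons p ta ih =>
    cases lc with
    | nil => simp at hc
    | cons q tc =>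
      simp only [List.zipWith_cons_cons, List.sum_cons]
      by_cases hpx : p = x <;> by_cases hqx : q = x
      · subst hpx hqx
        exact ⟨ta, tc, by simp, by simp, by simp⟩
      · subst hpx
        have hpt : p ∈ tc := (List.mem_cons.mp hc).resolve_left (Ne.symm hqx)
        refine ⟨ta, tc.replace p q, by simp, ?_, ?_⟩
        · rw [List.erase_cons_tail (by simpa using hqx)]
          exact List.replace_perm_cons_erase q hpt
        · exact zipWith_dist_replace_le ta tc p q
      · subst hqx
        have hqt : q ∈ ta := (List.mem_cons.mp ha).resolve_left (Ne.symm hpx)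
        refine ⟨ta.replace q p, tc, ?_, by simp, ?_⟩
        · rw [List.erase_cons_tail (by simpa using hpx)]
          exact List.replace_perm_cons_erase p hqt
        · rw [zipWith_dist_sum_comm, zipWith_dist_sum_comm ta, dist_comm p]
          exact zipWith_dist_replace_le tc ta q p
      · obtain ⟨ta', tc', hta, htc, hle⟩ :=
          ih ((List.mem_cons.mp ha).resolve_left (Ne.symm hpx))
            ((List.mem_cons.mp hc).resolve_left (Ne.symm hqx))
        refine ⟨p :: ta', q :: tc', ?_, ?_, ?_⟩
        · rw [List.erase_cons_tail (by simpa using hpx)]; exact hta.cons p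
        · rw [List.erase_cons_tail (by simpa using hqx)]; exact htc.cons q
        · simp only [List.zipWith_cons_cons, List.sum_cons]; linarith

theorem dE_cons_cons (M : ℝ) (x : X) (a c : Multiset X) :
    dE M (x ::ₘ a) (x ::ₘ c) = dE M a c := by
  have hcard :
      |((x ::ₘ c).card : ℝ) - ((x ::ₘ a).card : ℝ)| = |(c.card : ℝ) - (a.card : ℝ)| := by
    simp
  simp only [dE_eq_sInf_matchingCosts]
  apply le_antisymm
  · refine le_csInf (matchingCosts_nonempty M a c) ?_
    rintro _ ⟨la, lc, rfl, rfl, rfl⟩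
    refine csInf_le (bddBelow_matchingCosts M _ _) ⟨x :: la, x :: lc, rfl, rfl, ?_⟩
    simp
  · refine le_csInf (matchingCosts_nonempty M _ _) ?_
    rintro _ ⟨la, lc, hla, hlc, rfl⟩
    have hxa : x ∈ la := by simp [← Multiset.mem_coe, hla]
    have hxc : x ∈ lc := by simp [← Multiset.mem_coe, hlc]
    obtain ⟨la', lc', hla', hlc', hle⟩ := exists_perm_erase_zipWith_dist_le hxa hxc
    have hmem : (List.zipWith dist la' lc').sum + M * |(c.card : ℝ) - (a.card : ℝ)|
        ∈ matchingCosts M a c := by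
      refine ⟨la', lc', ?_, ?_, rfl⟩
      · rw [Multiset.coe_eq_coe.mpr hla', ← Multiset.coe_erase, hla, Multiset.erase_cons_head]
      · rw [Multiset.coe_eq_coe.mpr hlc', ← Multiset.coe_erase, hlc, Multiset.erase_cons_head]
    rw [hcard]
    linarith [csInf_le (bddBelow_matchingCosts M a c) hmem]

theorem dE_add_add (M : ℝ) (s a c : Multiset X) :
    dE M (s + a) (s + c) = dE M a c := by
  induction s using Multiset.induction_on with
  | empty => simp
  | cons x s ih => rw [Multiset.cons_add, Multiset.cons_add, dE_cons_cons, ih]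

end DecidableEq

end DE

theorem stmt_3_general {X : Type*} [MetricSpace X] [DecidableEq X] (M : ℝ)
    (a c : Multiset X) :
    dE M a c = dE M (a - a.inter c) (c - a.inter c) := by
  have hca : a.inter c ≤ a := Multiset.inter_le_left
  have hcc : a.inter c ≤ c := Multiset.inter_le_right
  calc dE M a c
      = dE M (a.inter c + (a - a.inter c)) (a.inter c + (c - a.inter c)) := by
        rw [add_tsub_cancel_of_le hca, add_tsub_cancel_of_le hcc]
    _ = dE M (a - a.inter c) (c - a.inter c) := DE.dE_add_add M _ _ _

/-- `d_E` is unchanged when `a` and `c` are replaced by the multiset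
differences `a - a ∩ c` and `c - a ∩ c`. -/
theorem stmt_3 {X : Type*} [MetricSpace X] [Nontrivial X] [DecidableEq X] (M : ℝ) (hM : 0 < M)
    (a c : Multiset X) :
    dE M a c = dE M (a - a.inter c) (c - a.inter c) :=
  stmt_3_general M a c
end

section
/- If d(x,y) = M for all x ≠ y in X (i.e. d/M is the discrete metric), then for all multisets a and c on X, d_E(a,c) = M·max(C(a_c), C(c_a)); in particular d_E generalises the bag distance. -/
/-!
Write `k = C(a ∩ c)`, `p = C(a_c)`, `q = C(c_a)`, so that `C(a) = p + k` and `C(c) = q + k`.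
Matching `a ∩ c` with itself and then `a_c` against `c_a` (which share no point) costs
`M min(p, q) + M |p - q| = M max(p, q)`. Conversely, along any matching at most `k` of the
`min(C(a), C(c))` matched pairs are pairs of equal points, and every other pair costs `M`.
-/

namespace Multiset

variable {α : Type*} [DecidableEq α]

lemma disjoint_sub_inter_sub_inter (a c : Multiset α) : Disjoint (a - a ∩ c) (c - a ∩ c) := by
  rw [← inter_eq_zero_iff_disjoint]
  ext x
  simp only [count_inter, count_sub, count_zero]
  omega

lemma card_sub_add_card_of_le {s t : Multiset α} (h : t ≤ s) : (s - t).card + t.card = s.card := by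
  rw [← card_add, tsub_add_cancel_of_le h]

end Multiset

section ZipDist

variable {X : Type*} [PseudoMetricSpace X] {M : ℝ}

lemma sum_zipWith_dist_of_disjoint (hdisc : ∀ x y : X, x ≠ y → dist x y = M)
    {l₁ l₂ : List X} (h : l₁.Disjoint l₂) :
    (List.zipWith dist l₁ l₂).sum = M * (min l₁.length l₂.length : ℕ) := by
  rw [List.sum_eq_card_nsmul _ M ?_, List.length_zipWith, nsmul_eq_mul, mul_comm]
  intro z hz
  simp only [List.mem_iff_getElem, List.getElem_zipWith, List.length_zipWith, lt_inf_iff] at hz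
  obtain ⟨i, ⟨h₁, h₂⟩, rfl⟩ := hz
  exact hdisc _ _ fun he => h (List.getElem_mem h₁) (he ▸ List.getElem_mem h₂)

lemma mul_min_length_le_sum_zipWith_dist_add_card_inter [DecidableEq X] (hM : 0 ≤ M)
    (hdisc : ∀ x y : X, x ≠ y → M ≤ dist x y) :
    ∀ l₁ l₂ : List X, M * (min l₁.length l₂.length : ℕ) ≤
      (List.zipWith dist l₁ l₂).sum + M * ((l₁ : Multiset X) ∩ l₂).card
  | [], _ => by simp
  | _ :: _, [] => by simp
  | x :: l₁, y :: l₂ => by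
    have ih := mul_min_length_le_sum_zipWith_dist_add_card_inter hM hdisc l₁ l₂
    simp only [List.length_cons, Nat.succ_min_succ, List.zipWith_cons_cons, List.sum_cons,
      ← Multiset.cons_coe] at ih ⊢
    push_cast at ih ⊢
    by_cases hxy : x = y
    · subst hxy
      rw [← Multiset.cons_inter_distrib, Multiset.card_cons, dist_self]
      push_cast
      linarith
    · have hinter : ((l₁ : Multiset X) ∩ l₂).card ≤ ((x ::ₘ l₁) ∩ (y ::ₘ l₂)).card :=
        Multiset.card_le_card <| Multiset.le_inter
          (Multiset.inter_le_left.trans (Multiset.le_cons_self _ _))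
          (Multiset.inter_le_right.trans (Multiset.le_cons_self _ _))
      have := mul_le_mul_of_nonneg_left (Nat.cast_le (α := ℝ).2 hinter) hM
      linarith [hdisc x y hxy]

lemma mul_min_card_sub_inter_le_sum_zipWith_dist [DecidableEq X] (hM : 0 ≤ M)
    (hdisc : ∀ x y : X, x ≠ y → M ≤ dist x y) (l₁ l₂ : List X) :
    M * min ((l₁ - (l₁ ∩ l₂ : Multiset X)).card : ℝ) ((l₂ - (l₁ ∩ l₂ : Multiset X)).card : ℝ) ≤
      (List.zipWith dist l₁ l₂).sum := by
  have hmin : min l₁.length l₂.length = min (l₁ - (l₁ ∩ l₂ : Multiset X)).card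
      (l₂ - (l₁ ∩ l₂ : Multiset X)).card + (l₁ ∩ l₂ : Multiset X).card := by
    rw [← Multiset.coe_card, ← Multiset.coe_card, ← min_add_add_right,
      Multiset.card_sub_add_card_of_le Multiset.inter_le_left,
      Multiset.card_sub_add_card_of_le Multiset.inter_le_right]
  have hlower := mul_min_length_le_sum_zipWith_dist_add_card_inter hM hdisc l₁ l₂
  rw [hmin] at hlower
  push_cast at hlower
  linarith

lemma exists_coe_eq_sum_zipWith_dist_eq [DecidableEq X] (hdisc : ∀ x y : X, x ≠ y → dist x y = M)
    (a c : Multiset X) :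
    ∃ la lc : List X, (la : Multiset X) = a ∧ (lc : Multiset X) = c ∧
      (List.zipWith dist la lc).sum = M * min ((a - a ∩ c).card : ℝ) ((c - a ∩ c).card : ℝ) := by
  refine ⟨(a ∩ c).toList ++ (a - a ∩ c).toList, (a ∩ c).toList ++ (c - a ∩ c).toList, ?_, ?_, ?_⟩
  · rw [← Multiset.coe_add, Multiset.coe_toList, Multiset.coe_toList,
      add_tsub_cancel_of_le Multiset.inter_le_left]
  · rw [← Multiset.coe_add, Multiset.coe_toList, Multiset.coe_toList,
      add_tsub_cancel_of_le Multiset.inter_le_right]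
  · have hdisj := (Multiset.coe_disjoint (a - a ∩ c).toList (c - a ∩ c).toList).1 <| by
      simpa only [Multiset.coe_toList] using Multiset.disjoint_sub_inter_sub_inter a c
    rw [List.zipWith_append rfl, List.sum_append, List.zipWith_self,
      sum_zipWith_dist_of_disjoint hdisc hdisj]
    simp only [dist_self, List.map_const', List.sum_replicate, smul_zero, zero_add,
      Multiset.length_toList, Nat.cast_min]

end ZipDist

theorem stmt_4_general {X : Type*} [MetricSpace X] [DecidableEq X] (M : ℝ) (hM : 0 < M)
    (hdisc : ∀ x y : X, x ≠ y → dist x y = M) (a c : Multiset X) :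
    dE M a c = M * max ((a - a.inter c).card : ℝ) ((c - a.inter c).card : ℝ) := by
  change dE M a c = M * max ((a - a ∩ c).card : ℝ) ((c - a ∩ c).card : ℝ)
  have hA : (a.card : ℝ) = (a - a ∩ c).card + (a ∩ c).card := by
    exact_mod_cast (Multiset.card_sub_add_card_of_le (Multiset.inter_le_left : a ∩ c ≤ a)).symm
  have hC : (c.card : ℝ) = (c - a ∩ c).card + (a ∩ c).card := by
    exact_mod_cast (Multiset.card_sub_add_card_of_le (Multiset.inter_le_right : a ∩ c ≤ c)).symm
  have hmax : ∀ p q : ℝ, M * max p q = M * min p q + M * |q - p| := fun p q => by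
    rw [← max_sub_min_eq_abs]; ring
  refine IsLeast.csInf_eq ⟨?_, ?_⟩
  · obtain ⟨la, lc, hla, hlc, hsum⟩ := exists_coe_eq_sum_zipWith_dist_eq hdisc a c
    refine ⟨la, lc, hla, hlc, ?_⟩
    rw [hsum, hA, hC, add_sub_add_right_eq_sub, hmax]
  · rintro r ⟨la, lc, rfl, rfl, rfl⟩
    have hlower := mul_min_card_sub_inter_le_sum_zipWith_dist hM.le
      (fun x y h => (hdisc x y h).ge) la lc
    rw [hA, hC, add_sub_add_right_eq_sub, hmax]
    linarith

/-- If `d/M` is the discrete metric then `d_E` of `a`, `c` equals `M` times the larger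
of the cardinalities of the multiset differences; so `d_E` generalises the bag distance. -/
theorem stmt_4 {X : Type*} [MetricSpace X] [Nontrivial X] [DecidableEq X] (M : ℝ) (hM : 0 < M)
    (hdisc : ∀ x y : X, x ≠ y → dist x y = M) (a c : Multiset X) :
    dE M a c = M * max ((a - a.inter c).card : ℝ) ((c - a.inter c).card : ℝ) :=
  stmt_4_general M hM hdisc a c
end

section
/- If x,y ∈ X and a,c are multisets on X with C(a) = C(c), then |d_E(a + e_x, c + e_y) − d_E(a,c)| ≤ d(x,y). -/
/-!
When `C(a) = C(c)` the penalty term of `d_E` vanishes and `d_E(a, c)` is the least total cost of a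
matching of `a` with `c`, i.e. a multiset of pairs with marginals `a` and `c`. A matching of
`a` with `c` extends by the pair `(x, y)` to one of `a + e_x` with `c + e_y` at extra cost
`d(x, y)`. Conversely, from a matching of `a + e_x` with `c + e_y` in which `x` is matched to
`u` and `v` to `y`, rematching `v` to `u` gives a matching of `a` with `c` that, by the
triangle inequality `d(v, u) ≤ d(v, y) + d(y, x) + d(x, u)`, costs at most `d(x, y)` more.
-/

theorem csInf_le_csInf_add {S T : Set ℝ} {δ : ℝ} (hS : S.Nonempty) (hT : BddBelow T)
    (h : ∀ s ∈ S, ∃ t ∈ T, t ≤ s + δ) : sInf T ≤ sInf S + δ := by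
  rw [← sub_le_iff_le_add]
  refine le_csInf hS fun s hs => ?_
  obtain ⟨t, ht, hts⟩ := h s hs
  linarith [csInf_le hT ht]

namespace Multiset

section Matching

variable {α β : Type*}

def IsMatching (p : Multiset (α × β)) (a : Multiset α) (c : Multiset β) : Prop :=
  p.map Prod.fst = a ∧ p.map Prod.snd = c

theorem IsMatching.cons {p : Multiset (α × β)} {a : Multiset α} {c : Multiset β}
    (h : IsMatching p a c) (x : α) (y : β) : IsMatching ((x, y) ::ₘ p) (x ::ₘ a) (y ::ₘ c) := by
  simp [IsMatching, h.1, h.2]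

theorem isMatching_zip {la : List α} {lc : List β} (h : la.length = lc.length) :
    IsMatching (la.zip lc : Multiset (α × β)) la lc := by
  simp [IsMatching, List.map_fst_zip h.le, List.map_snd_zip h.ge]

theorem nonempty_isMatching {a : Multiset α} {c : Multiset β} (h : card a = card c) :
    {p | IsMatching p a c}.Nonempty := by
  have h := isMatching_zip (la := a.toList) (lc := c.toList) (by simpa using h)
  rw [coe_toList, coe_toList] at h
  exact ⟨_, h⟩

end Matching

variable {X : Type*} [MetricSpace X]

noncomputable def matchingCost (p : Multiset (X × X)) : ℝ :=
  (p.map fun q => dist q.1 q.2).sum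

@[simp]
theorem matchingCost_cons (q : X × X) (p : Multiset (X × X)) :
    matchingCost (q ::ₘ p) = dist q.1 q.2 + matchingCost p := by
  simp [matchingCost]

theorem matchingCost_nonneg (p : Multiset (X × X)) : 0 ≤ matchingCost p :=
  sum_nonneg fun _ hr => by
    obtain ⟨q, -, rfl⟩ := mem_map.1 hr
    exact dist_nonneg

theorem bddBelow_image_matchingCost (s : Set (Multiset (X × X))) :
    BddBelow (matchingCost '' s) :=
  ⟨0, by rintro _ ⟨p, -, rfl⟩; exact matchingCost_nonneg p⟩

theorem IsMatching.exists_le_add_dist_of_cons {p : Multiset (X × X)} {a c : Multiset X}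
    {x y : X} (h : IsMatching p (x ::ₘ a) (y ::ₘ c)) :
    ∃ p', IsMatching p' a c ∧ matchingCost p' ≤ matchingCost p + dist x y := by
  obtain ⟨hfst, hsnd⟩ := h
  obtain ⟨⟨x', u⟩, hxu, rfl⟩ := mem_map.1 (hfst ▸ mem_cons_self x a)
  obtain ⟨q, rfl⟩ := exists_cons_of_mem hxu
  simp only [map_cons, cons_inj_right] at hfst hsnd
  by_cases huy : u = y
  · subst huy
    refine ⟨q, ⟨hfst, (cons_inj_right u).1 hsnd⟩, ?_⟩
    simp only [matchingCost_cons]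
    linarith [dist_nonneg (x := x') (y := u)]
  · have hy : y ∈ q.map Prod.snd :=
      (mem_cons.1 (hsnd ▸ mem_cons_self y c)).resolve_left (Ne.symm huy)
    obtain ⟨⟨v, y'⟩, hvy, rfl⟩ := mem_map.1 hy
    obtain ⟨r, rfl⟩ := exists_cons_of_mem hvy
    refine ⟨(v, u) ::ₘ r, ⟨by simpa using hfst, ?_⟩, ?_⟩
    · rw [map_cons, cons_swap, cons_inj_right] at hsnd
      simpa using hsnd
    · simp only [matchingCost_cons]
      linarith [dist_triangle4 v y' x' u, dist_comm x' y']

theorem matchingCost_zip (la lc : List X) (h : la.length = lc.length) :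
    matchingCost (la.zip lc : Multiset (X × X)) = (List.zipWith dist la lc).sum := by
  calc matchingCost (la.zip lc : Multiset (X × X))
      = (List.zipWith dist ((la.zip lc).map Prod.fst) ((la.zip lc).map Prod.snd)).sum := by
        simp [matchingCost, List.zipWith_map, List.zipWith_self]
    _ = (List.zipWith dist la lc).sum := by rw [List.map_fst_zip h.le, List.map_snd_zip h.ge]

end Multiset

open Multiset

theorem dE_eq_sInf_matchingCost {X : Type*} [MetricSpace X] (M : ℝ) {a c : Multiset X}
    (h : card a = card c) :
    dE M a c = sInf (matchingCost '' {p | IsMatching p a c}) := by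
  rw [dE, h, sub_self, abs_zero, mul_zero]
  congr 1
  ext r
  constructor
  · rintro ⟨la, lc, rfl, rfl, rfl⟩
    have hlen : la.length = lc.length := by simpa using h
    exact ⟨_, isMatching_zip hlen, by rw [matchingCost_zip _ _ hlen, add_zero]⟩
  · rintro ⟨p, ⟨rfl, rfl⟩, rfl⟩
    refine ⟨p.toList.map Prod.fst, p.toList.map Prod.snd, ?_, ?_, ?_⟩
    · rw [← map_coe, coe_toList]
    · rw [← map_coe, coe_toList]
    · rw [List.zipWith_map, List.zipWith_self, add_zero]
      conv_lhs => rw [← coe_toList p]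
      simp [matchingCost]

theorem stmt_5_general {X : Type*} [MetricSpace X] (M : ℝ)
    (x y : X) (a c : Multiset X) (hcard : a.card = c.card) :
    |dE M (a + {x}) (c + {y}) - dE M a c| ≤ dist x y := by
  have hcard' : card (x ::ₘ a) = card (y ::ₘ c) := by simp [hcard]
  rw [add_comm a, add_comm c, singleton_add, singleton_add, dE_eq_sInf_matchingCost M hcard,
    dE_eq_sInf_matchingCost M hcard', abs_sub_le_iff, sub_le_iff_le_add', sub_le_iff_le_add']
  constructor
  · refine csInf_le_csInf_add ((nonempty_isMatching hcard).image _)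
      (bddBelow_image_matchingCost _) ?_
    rintro _ ⟨p, hp, rfl⟩
    exact ⟨_, ⟨_, hp.cons x y, rfl⟩, by rw [matchingCost_cons, add_comm]⟩
  · refine csInf_le_csInf_add ((nonempty_isMatching hcard').image _)
      (bddBelow_image_matchingCost _) ?_
    rintro _ ⟨p, hp, rfl⟩
    obtain ⟨p', hp', hcost⟩ := hp.exists_le_add_dist_of_cons
    exact ⟨_, ⟨p', hp', rfl⟩, hcost⟩

/-- If `C(a) = C(c)` then adding one point to each of `a` and `c` changes `d_E`
by at most the distance between the two added points. -/
theorem stmt_5 {X : Type*} [MetricSpace X] [Nontrivial X] (M : ℝ) (hM : 0 < M)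
    (x y : X) (a c : Multiset X) (hcard : a.card = c.card) :
    |dE M (a + {x}) (c + {y}) - dE M a c| ≤ dist x y :=
  stmt_5_general M x y a c hcard
end

section
/- Assume d is bounded with θ ≤ 1, so that both d_E and d_Em are metrics on E. For any sequence (S_i) of multisets on X: (i) (S_i) is Cauchy with respect to d_E if and only if it is Cauchy with respect to d_Em; (ii) (S_i) converges with respect to d_E if and only if it converges with respect to d_Em; (iii) for any l ∈ E, S_i → l with respect to d_E if and only if S_i → l with respect to d_Em. -/

private lemma myzip_sum_nonneg {X : Type*} [MetricSpace X] :
    ∀ (la lc : List X), 0 ≤ (List.zipWith dist la lc).sum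
  | [], _ => by simp
  | _ :: _, [] => by simp
  | x :: la, y :: lc => by
    simp only [List.zipWith_cons_cons, List.sum_cons]
    exact add_nonneg dist_nonneg (myzip_sum_nonneg la lc)

private lemma mydE_set_nonempty {X : Type*} [MetricSpace X] (M : ℝ) (a c : Multiset X) :
    {r : ℝ | ∃ la lc : List X, (la : Multiset X) = a ∧ (lc : Multiset X) = c ∧
      r = (List.zipWith dist la lc).sum + M * |(c.card : ℝ) - (a.card : ℝ)|}.Nonempty :=
  ⟨_, a.toList, c.toList, a.coe_toList, c.coe_toList, rfl⟩

private lemma mydE_bddBelow {X : Type*} [MetricSpace X] {M : ℝ} (hM : 0 ≤ M)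
    (a c : Multiset X) :
    BddBelow {r : ℝ | ∃ la lc : List X, (la : Multiset X) = a ∧ (lc : Multiset X) = c ∧
      r = (List.zipWith dist la lc).sum + M * |(c.card : ℝ) - (a.card : ℝ)|} := by
  refine ⟨0, ?_⟩
  rintro r ⟨la, lc, -, -, rfl⟩
  have h1 := myzip_sum_nonneg la lc
  have h2 : 0 ≤ M * |(c.card : ℝ) - (a.card : ℝ)| := mul_nonneg hM (abs_nonneg _)
  linarith

private lemma le_mydE {X : Type*} [MetricSpace X] {M : ℝ} (hM : 0 ≤ M) (a c : Multiset X) :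
    M * |(c.card : ℝ) - (a.card : ℝ)| ≤ dE M a c := by
  apply le_csInf (mydE_set_nonempty M a c)
  rintro r ⟨la, lc, -, -, rfl⟩
  have h1 := myzip_sum_nonneg la lc
  linarith

private lemma mydE_nonneg {X : Type*} [MetricSpace X] {M : ℝ} (hM : 0 ≤ M) (a c : Multiset X) :
    0 ≤ dE M a c :=
  le_trans (mul_nonneg hM (abs_nonneg _)) (le_mydE hM a c)

private lemma mydEm_nonneg {X : Type*} [MetricSpace X] {M : ℝ} (hM : 0 ≤ M) (a c : Multiset X) :
    0 ≤ dEm M a c :=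
  div_nonneg (mydE_nonneg hM a c) (by positivity)

private lemma mydE_empty {X : Type*} [MetricSpace X] {M : ℝ} (hM : 0 ≤ M) :
    dE M (0 : Multiset X) 0 = 0 := by
  refine le_antisymm ?_ (mydE_nonneg hM 0 0)
  apply csInf_le (mydE_bddBelow hM 0 0)
  exact ⟨[], [], rfl, rfl, by simp⟩

private lemma mydE_eq {X : Type*} [MetricSpace X] {M : ℝ} (hM : 0 ≤ M) (a c : Multiset X) :
    dE M a c = dEm M a c * (max a.card c.card : ℕ) := by
  rcases Nat.eq_zero_or_pos (max a.card c.card) with h | h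
  · have ha : a = 0 := Multiset.card_eq_zero.mp (by omega)
    have hc : c = 0 := Multiset.card_eq_zero.mp (by omega)
    subst ha; subst hc
    simp [mydE_empty hM]
  · rw [dEm, div_mul_cancel₀]
    exact_mod_cast h.ne'

private lemma mydEm_le_mydE {X : Type*} [MetricSpace X] {M : ℝ} (hM : 0 ≤ M)
    (a c : Multiset X) : dEm M a c ≤ dE M a c := by
  rcases Nat.eq_zero_or_pos (max a.card c.card) with h | h
  · rw [dEm, h]; simpa using mydE_nonneg hM a c
  · rw [dEm]
    have h1 : (1:ℝ) ≤ (max a.card c.card : ℕ) := by exact_mod_cast h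
    calc dE M a c / (max a.card c.card : ℕ) ≤ dE M a c / 1 :=
          div_le_div_of_nonneg_left (mydE_nonneg hM a c) (by linarith) h1
      _ = dE M a c := div_one _

private lemma mycard_bound {X : Type*} [MetricSpace X] {M : ℝ} (hM : 0 < M) {a c : Multiset X}
    (h : dEm M a c < M / 2) : max a.card c.card ≤ 2 * c.card := by
  rcases Nat.eq_zero_or_pos (max a.card c.card) with hm | hm
  · omega
  have hmR : (0:ℝ) < ((max a.card c.card : ℕ) : ℝ) := by exact_mod_cast hm
  have hE := mydE_eq hM.le a c
  have h1 : dE M a c < M / 2 * ((max a.card c.card : ℕ) : ℝ) := by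
    rw [hE]; exact mul_lt_mul_of_pos_right h hmR
  have h2 : M * |(c.card : ℝ) - (a.card : ℝ)| < M * (((max a.card c.card : ℕ) : ℝ) / 2) :=
    lt_of_le_of_lt (le_mydE hM.le a c) (by linarith)
  have h3 : |(c.card : ℝ) - (a.card : ℝ)| < ((max a.card c.card : ℕ) : ℝ) / 2 :=
    lt_of_mul_lt_mul_left h2 hM.le
  rcases le_total a.card c.card with hpq | hpq
  · have hmax : max a.card c.card = c.card := max_eq_right hpq
    rw [hmax] at h3 ⊢
    rw [abs_of_nonneg (by exact_mod_cast sub_nonneg.mpr (by exact_mod_cast hpq : (a.card:ℝ) ≤ c.card))] at h3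
    have : (c.card : ℝ) < 2 * a.card := by linarith
    have : c.card < 2 * a.card := by exact_mod_cast this
    omega
  · have hmax : max a.card c.card = a.card := max_eq_left hpq
    rw [hmax] at h3 ⊢
    rw [abs_of_nonpos (by exact_mod_cast sub_nonpos.mpr (by exact_mod_cast hpq : (c.card:ℝ) ≤ a.card))] at h3
    have : (a.card : ℝ) < 2 * c.card := by linarith
    exact_mod_cast this.le

private lemma mydE_lt {X : Type*} [MetricSpace X] {M : ℝ} (hM : 0 < M) {a c : Multiset X}
    {K : ℕ} (hK : max a.card c.card ≤ K) {ε : ℝ} (hε : 0 < ε)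
    (h : dEm M a c < ε / (K + 1)) : dE M a c < ε := by
  have hKpos : (0:ℝ) < (K : ℝ) + 1 := by positivity
  have h1 : dE M a c = dEm M a c * ((max a.card c.card : ℕ) : ℝ) := mydE_eq hM.le a c
  have h2 : ((max a.card c.card : ℕ) : ℝ) ≤ (K : ℝ) + 1 := by
    have : ((max a.card c.card : ℕ) : ℝ) ≤ (K : ℝ) := by exact_mod_cast hK
    linarith
  have h3 : dEm M a c * ((max a.card c.card : ℕ) : ℝ) ≤ dEm M a c * ((K : ℝ) + 1) :=
    mul_le_mul_of_nonneg_left h2 (mydEm_nonneg hM.le a c)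
  have h4 : dEm M a c * ((K : ℝ) + 1) < (ε / (K + 1)) * ((K : ℝ) + 1) :=
    mul_lt_mul_of_pos_right h hKpos
  rw [div_mul_cancel₀ _ hKpos.ne'] at h4
  linarith


/-- For `d` bounded with `(sup d)/M ≤ 1` (so that `d_E` and `d_Em` are metrics), a
sequence of multisets is Cauchy / convergent / convergent to a given limit `l` for
`d_E` iff the same holds for `d_Em`. -/
theorem stmt_6 {X : Type*} [MetricSpace X] [Nontrivial X] (M : ℝ) (hM : 0 < M)
    (hbdd : ∃ B : ℝ, ∀ x y : X, dist x y ≤ B) (htheta : supD X / M ≤ 1)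
    (S : ℕ → Multiset X) :
    (IsCauchyWith (dE M) S ↔ IsCauchyWith (dEm M) S) ∧
    ((∃ l : Multiset X, TendsToWith (dE M) S l) ↔
      (∃ l : Multiset X, TendsToWith (dEm M) S l)) ∧
    (∀ l : Multiset X, TendsToWith (dE M) S l ↔ TendsToWith (dEm M) S l) := by
  have key : ∀ l : Multiset X, TendsToWith (dE M) S l ↔ TendsToWith (dEm M) S l := by
    intro l
    constructor
    · intro h ε hε
      obtain ⟨N, hN⟩ := h ε hε
      exact ⟨N, fun n hn => lt_of_le_of_lt (mydEm_le_mydE hM.le _ _) (hN n hn)⟩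
    · intro h ε hε
      obtain ⟨N0, hN0⟩ := h (M / 2) (by linarith)
      set K := 2 * Multiset.card l with hKdef
      have hKε : 0 < ε / (K + 1) := by positivity
      obtain ⟨N1, hN1⟩ := h (ε / (K + 1)) hKε
      refine ⟨max N0 N1, fun n hn => ?_⟩
      have hb : max (S n).card l.card ≤ K :=
        mycard_bound hM (hN0 n (le_trans (le_max_left _ _) hn))
      exact mydE_lt hM hb hε (hN1 n (le_trans (le_max_right _ _) hn))
  refine ⟨?_, ?_, key⟩
  · constructor
    · intro h ε hε
      obtain ⟨N, hN⟩ := h ε hε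
      exact ⟨N, fun m hm n hn => lt_of_le_of_lt (mydEm_le_mydE hM.le _ _) (hN m hm n hn)⟩
    · intro h ε hε
      obtain ⟨N0, hN0⟩ := h (M / 2) (by linarith)
      set K := 2 * Multiset.card (S N0) with hKdef
      have hKε : 0 < ε / (K + 1) := by positivity
      obtain ⟨N1, hN1⟩ := h (ε / (K + 1)) hKε
      refine ⟨max N0 N1, fun m hm n hn => ?_⟩
      have hcard : ∀ j ≥ max N0 N1, (S j).card ≤ K := by
        intro j hj
        have := mycard_bound hM (hN0 j (le_trans (le_max_left _ _) hj) N0 le_rfl)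
        omega
      have hb : max (S m).card (S n).card ≤ K :=
        max_le (hcard m hm) (hcard n hn)
      exact mydE_lt hM hb hε
        (hN1 m (le_trans (le_max_right _ _) hm) n (le_trans (le_max_right _ _) hn))
  · exact ⟨fun ⟨l, hl⟩ => ⟨l, (key l).mp hl⟩, fun ⟨l, hl⟩ => ⟨l, (key l).mpr hl⟩⟩
end

section
/- Assume d is bounded with θ ≤ 2, so that d_E is a metric on E. Then d_E is a complete metric on E if and only if d is a complete metric on X. Likewise, if θ ≤ 1, then d_Em is a complete metric on E if and only if d is complete. -/
/-!
Multisets of different cardinalities are at `dE`-distance at least `M`, and at `dEm`-distance at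
least `M` divided by the larger cardinality, so a Cauchy sequence eventually has a constant
cardinality `k`. Among multisets of cardinality `k`, `dE` is an optimal-matching distance: along a
subsequence whose consecutive distances are below `2⁻ⁿ`, enumerations can be chosen so that each is
matched almost optimally with the next, which makes every coordinate a Cauchy sequence in `X`; the
multiset of the coordinate limits is the limit. Conversely, singletons embed `X` isometrically and
a multiset close to a singleton is a singleton, so completeness passes back to `X`.
-/

open Filter Topology

namespace List

variable {α β : Type*}

theorem exists_perm_map_eq_of_perm {f : α → β} :
    ∀ {l₁ : List β} {l : List α}, l₁ ~ l.map f → ∃ l' : List α, l' ~ l ∧ l'.map f = l₁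
  | [], _, h => ⟨[], by simpa using h.symm, rfl⟩
  | x :: xs, l, h => by
    obtain ⟨p, hp, rfl⟩ := mem_map.1 (h.subset mem_cons_self)
    obtain ⟨s, t, rfl⟩ := append_of_mem hp
    have hmid : s ++ p :: t ~ p :: (s ++ t) := perm_middle
    have htail : xs ~ (s ++ t).map f := by simpa using h.trans (hmid.map f)
    obtain ⟨l', hl', hmap⟩ := exists_perm_map_eq_of_perm htail
    exact ⟨p :: l', (hl'.cons p).trans hmid.symm, by simp [hmap]⟩

theorem exists_ofFn_eq {l : List α} {k : ℕ} (h : l.length = k) :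
    ∃ f : Fin k → α, ofFn f = l := by
  subst h
  exact ⟨_, ofFn_getElem⟩

theorem zipWith_ofFn {γ : Type*} {k : ℕ} (d : α → β → γ) (f : Fin k → α) (g : Fin k → β) :
    zipWith d (ofFn f) (ofFn g) = ofFn fun i => d (f i) (g i) := by
  apply ext_getElem <;> simp

theorem exists_perm_sum_zipWith_eq {γ : Type*} [AddCommMonoid γ] (d : α → β → γ)
    {l₁ l₁' : List α} {l₂ : List β} (hlen : l₁.length = l₂.length) (hperm : l₁' ~ l₁) :
    ∃ l₂' : List β, l₂' ~ l₂ ∧ (zipWith d l₁' l₂').sum = (zipWith d l₁ l₂).sum := by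
  have hfst : (l₁.zip l₂).map Prod.fst = l₁ := map_fst_zip hlen.le
  have hsnd : (l₁.zip l₂).map Prod.snd = l₂ := map_snd_zip hlen.ge
  obtain ⟨P, hP, hPfst⟩ := exists_perm_map_eq_of_perm (hfst.symm ▸ hperm)
  refine ⟨P.map Prod.snd, hsnd ▸ hP.map _, ?_⟩
  rw [← hPfst, zipWith_map, zipWith_self, ← map_uncurry_zip_eq_zipWith]
  exact (hP.map _).sum_eq

end List

theorem Multiset.exists_ofFn_eq {α : Type*} {a : Multiset α} {k : ℕ} (h : a.card = k) :
    ∃ f : Fin k → α, (List.ofFn f : Multiset α) = a := by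
  obtain ⟨f, hf⟩ := List.exists_ofFn_eq (l := a.toList) (by simpa using h)
  exact ⟨f, by rw [hf, coe_toList]⟩

theorem Nat.eq_of_abs_sub_lt_one {m n : ℕ} (h : |(n : ℝ) - m| < 1) : m = n := by
  obtain ⟨h₁, h₂⟩ := abs_sub_lt_iff.1 h
  have : n < m + 1 := by exact_mod_cast (by linarith : (n : ℝ) < m + 1)
  have : m < n + 1 := by exact_mod_cast (by linarith : (m : ℝ) < n + 1)
  omega

section Sequences

variable {α : Type*} {ρ ρ' : α → α → ℝ} {S : ℕ → α} {l : α}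

theorem IsCauchyWith.comp_add (hS : IsCauchyWith ρ S) (N : ℕ) :
    IsCauchyWith ρ fun n => S (n + N) := fun ε hε => by
  obtain ⟨K, hK⟩ := hS ε hε
  exact ⟨K, fun m hm n hn => hK _ (by omega) _ (by omega)⟩

theorem TendsToWith.of_comp_add {N : ℕ} (h : TendsToWith ρ (fun n => S (n + N)) l) :
    TendsToWith ρ S l := fun ε hε => by
  obtain ⟨K, hK⟩ := h ε hε
  refine ⟨K + N, fun n hn => ?_⟩
  simpa [Nat.sub_add_cancel (by omega : N ≤ n)] using hK (n - N) (by omega)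

theorem IsCauchyWith.of_eq_mul {c : ℝ} (hc : 0 < c)
    (h : ∀ m n, ρ' (S m) (S n) = c * ρ (S m) (S n)) (hS : IsCauchyWith ρ S) :
    IsCauchyWith ρ' S := fun ε hε => by
  obtain ⟨N, hN⟩ := hS (ε / c) (div_pos hε hc)
  exact ⟨N, fun m hm n hn => by rw [h, ← lt_div_iff₀' hc]; exact hN m hm n hn⟩

theorem TendsToWith.of_eq_mul {c : ℝ} (hc : 0 < c) (h : ∀ n, ρ' (S n) l = c * ρ (S n) l)
    (hS : TendsToWith ρ S l) : TendsToWith ρ' S l := fun ε hε => by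
  obtain ⟨N, hN⟩ := hS (ε / c) (div_pos hε hc)
  exact ⟨N, fun n hn => by rw [h, ← lt_div_iff₀' hc]; exact hN n hn⟩

theorem TendsToWith.of_isCauchyWith_of_comp
    (htri : ∀ m n, ρ (S m) l ≤ ρ (S m) (S n) + ρ (S n) l) (hS : IsCauchyWith ρ S)
    {φ : ℕ → ℕ} (hφ : StrictMono φ) (h : TendsToWith ρ (S ∘ φ) l) :
    TendsToWith ρ S l := fun ε hε => by
  obtain ⟨N₁, hN₁⟩ := hS (ε / 2) (half_pos hε)
  obtain ⟨N₂, hN₂⟩ := h (ε / 2) (half_pos hε)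
  refine ⟨N₁, fun n hn => ?_⟩
  have hφN : N₁ ≤ φ (max N₁ N₂) := (le_max_left _ _).trans (hφ.id_le _)
  have hlim : ρ (S (φ (max N₁ N₂))) l < ε / 2 := hN₂ _ (le_max_right _ _)
  linarith [htri n (φ (max N₁ N₂)), hN₁ n hn _ hφN]

end Sequences

section MatchingDistance

variable {X : Type*} [MetricSpace X] {M : ℝ} {a c : Multiset X}

theorem sum_zipWith_dist_nonneg : ∀ l₁ l₂ : List X, 0 ≤ (List.zipWith dist l₁ l₂).sum
  | [], _ | _ :: _, [] => by simp
  | x :: l₁, y :: l₂ => by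
    simpa using add_nonneg dist_nonneg (sum_zipWith_dist_nonneg l₁ l₂)

theorem mul_abs_card_sub_mem_lowerBounds (a c : Multiset X) :
    M * |(c.card : ℝ) - a.card| ∈ lowerBounds
      {r : ℝ | ∃ la lc : List X, (la : Multiset X) = a ∧ (lc : Multiset X) = c ∧
        r = (List.zipWith dist la lc).sum + M * |(c.card : ℝ) - (a.card : ℝ)|} := by
  rintro _ ⟨la, lc, -, -, rfl⟩
  linarith [sum_zipWith_dist_nonneg la lc]

theorem mul_abs_card_sub_le_dE (a c : Multiset X) : M * |(c.card : ℝ) - a.card| ≤ dE M a c :=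
  le_csInf ⟨_, a.toList, c.toList, a.coe_toList, c.coe_toList, rfl⟩
    (mul_abs_card_sub_mem_lowerBounds a c)

theorem dE_le_sum_zipWith {la lc : List X} (ha : (la : Multiset X) = a)
    (hc : (lc : Multiset X) = c) :
    dE M a c ≤ (List.zipWith dist la lc).sum + M * |(c.card : ℝ) - a.card| :=
  csInf_le ⟨_, mul_abs_card_sub_mem_lowerBounds a c⟩ ⟨la, lc, ha, hc, rfl⟩

theorem exists_sum_zipWith_lt_of_dE_lt {ε : ℝ} (h : dE M a c < ε) :
    ∃ la lc : List X, (la : Multiset X) = a ∧ (lc : Multiset X) = c ∧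
      (List.zipWith dist la lc).sum + M * |(c.card : ℝ) - a.card| < ε := by
  obtain ⟨_, ⟨la, lc, ha, hc, rfl⟩, hlt⟩ :=
    (csInf_lt_iff ⟨_, mul_abs_card_sub_mem_lowerBounds a c⟩
      ⟨_, a.toList, c.toList, a.coe_toList, c.coe_toList, rfl⟩).1 h
  exact ⟨la, lc, ha, hc, hlt⟩

theorem dE_singleton (x y : X) : dE M {x} {y} = dist x y := by
  refine le_antisymm (by simpa using dE_le_sum_zipWith (M := M) (la := [x]) (lc := [y]) rfl rfl)
    (le_csInf ⟨_, [x], [y], rfl, rfl, rfl⟩ ?_)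
  rintro _ ⟨la, lc, ha, hc, rfl⟩
  rw [← Multiset.coe_singleton, Multiset.coe_eq_coe, List.perm_singleton] at ha hc
  simp [ha, hc]

variable {k : ℕ}

theorem dE_le_sum_dist {f g : Fin k → X} (hf : (List.ofFn f : Multiset X) = a)
    (hg : (List.ofFn g : Multiset X) = c) : dE M a c ≤ ∑ i, dist (f i) (g i) := by
  subst hf hg
  simpa [List.zipWith_ofFn, List.sum_ofFn] using
    dE_le_sum_zipWith (M := M) (la := List.ofFn f) (lc := List.ofFn g) rfl rfl

theorem exists_sum_dist_lt_of_dE_lt (hac : a.card = c.card) {f : Fin k → X}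
    (hf : (List.ofFn f : Multiset X) = a) {ε : ℝ} (h : dE M a c < ε) :
    ∃ g : Fin k → X, (List.ofFn g : Multiset X) = c ∧ ∑ i, dist (f i) (g i) < ε := by
  obtain ⟨la, lc, rfl, rfl, hlt⟩ := exists_sum_zipWith_lt_of_dE_lt h
  simp only [Multiset.coe_card] at hac hlt
  rw [hac, sub_self, abs_zero, mul_zero, add_zero] at hlt
  have hperm : (List.ofFn f).Perm la := Multiset.coe_eq_coe.1 hf
  obtain ⟨lc', hlc', hsum⟩ := List.exists_perm_sum_zipWith_eq dist hac hperm
  obtain ⟨g, rfl⟩ := List.exists_ofFn_eq (l := lc') (k := k)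
    (by simp [hlc'.length_eq, ← hac, ← hperm.length_eq])
  refine ⟨g, Multiset.coe_eq_coe.2 hlc', ?_⟩
  rwa [← List.sum_ofFn, ← List.zipWith_ofFn, hsum]

theorem dE_triangle_of_card_eq {b : Multiset X} (hab : a.card = b.card)
    (hbc : b.card = c.card) : dE M a c ≤ dE M a b + dE M b c := by
  refine le_of_forall_pos_lt_add fun δ hδ => ?_
  obtain ⟨f, hf⟩ := Multiset.exists_ofFn_eq (rfl : a.card = a.card)
  obtain ⟨g, hg, hfg⟩ :=
    exists_sum_dist_lt_of_dE_lt hab hf (lt_add_of_pos_right (dE M a b) (half_pos hδ))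
  obtain ⟨h, hh, hgh⟩ :=
    exists_sum_dist_lt_of_dE_lt hbc hg (lt_add_of_pos_right (dE M b c) (half_pos hδ))
  calc dE M a c ≤ ∑ i, dist (f i) (h i) := dE_le_sum_dist hf hh
    _ ≤ ∑ i, (dist (f i) (g i) + dist (g i) (h i)) :=
        Finset.sum_le_sum fun i _ => dist_triangle _ _ _
    _ < _ := by rw [Finset.sum_add_distrib]; linarith

end MatchingDistance

section Cardinality

variable {X : Type*} [MetricSpace X] {M : ℝ} {a c : Multiset X}

theorem card_eq_of_dE_lt (hM : 0 < M) (h : dE M a c < M) : a.card = c.card :=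
  Nat.eq_of_abs_sub_lt_one
    ((mul_lt_iff_lt_one_right hM).1 ((mul_abs_card_sub_le_dE a c).trans_lt h))

theorem dEm_eq_dE_div (h : a.card = c.card) : dEm M a c = dE M a c / a.card := by
  simp [dEm, h]

theorem dEm_singleton (x y : X) : dEm M {x} {y} = dist x y := by
  simp [dEm, dE_singleton]

theorem dEm_nonneg (hM : 0 ≤ M) (a c : Multiset X) : 0 ≤ dEm M a c :=
  div_nonneg ((by positivity : 0 ≤ M * _).trans (mul_abs_card_sub_le_dE a c))
    (Nat.cast_nonneg _)

theorem mul_abs_card_sub_le_dEm_mul (a c : Multiset X) :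
    M * |(c.card : ℝ) - a.card| ≤ dEm M a c * (max a.card c.card : ℕ) := by
  rcases Nat.eq_zero_or_pos (max a.card c.card) with h | h
  · simp [Nat.max_eq_zero_iff.1 h]
  · rw [dEm, div_mul_cancel₀ _ (by positivity)]
    exact mul_abs_card_sub_le_dE a c

theorem card_le_two_mul_of_dEm_lt (hM : 0 < M) (h : dEm M a c < M / 2) :
    c.card ≤ 2 * a.card := by
  by_contra! hlt
  have key := mul_abs_card_sub_le_dEm_mul (M := M) a c
  rw [max_eq_right (by omega),
    abs_of_nonneg (by simp only [sub_nonneg, Nat.cast_le]; omega)] at key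
  have : (2 * a.card + 1 : ℝ) ≤ c.card := by exact_mod_cast hlt
  nlinarith

theorem card_eq_of_dEm_mul_lt (hM : 0 < M) {B : ℝ} (ha : (a.card : ℝ) ≤ B)
    (hc : (c.card : ℝ) ≤ B) (h : dEm M a c * B < M) : a.card = c.card := by
  refine Nat.eq_of_abs_sub_lt_one ((mul_lt_iff_lt_one_right hM).1
    ((mul_abs_card_sub_le_dEm_mul a c).trans_lt ?_))
  refine lt_of_le_of_lt (mul_le_mul_of_nonneg_left ?_ (dEm_nonneg hM.le a c)) h
  simpa using ⟨ha, hc⟩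

variable {S : ℕ → Multiset X}

theorem IsCauchyWith.eventually_card_eq_of_dE (hM : 0 < M) (hS : IsCauchyWith (dE M) S) :
    ∃ N, ∀ n ≥ N, (S n).card = (S N).card := by
  obtain ⟨N, hN⟩ := hS M hM
  exact ⟨N, fun n hn => (card_eq_of_dE_lt hM (hN N le_rfl n hn)).symm⟩

/-- With `ε = M / 2` the cardinalities stay below `B = 2 k + 1` for a reference cardinality `k`;
only then does `ε = M / B` force them to be constant. -/
theorem IsCauchyWith.eventually_card_eq_of_dEm (hM : 0 < M) (hS : IsCauchyWith (dEm M) S) :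
    ∃ N, ∀ n ≥ N, (S n).card = (S N).card := by
  obtain ⟨N₁, h₁⟩ := hS (M / 2) (half_pos hM)
  set B : ℝ := 2 * (S N₁).card + 1
  have hB : 0 < B := by positivity
  have hbound : ∀ n ≥ N₁, ((S n).card : ℝ) ≤ B := fun n hn => by
    have : (S n).card ≤ 2 * (S N₁).card := card_le_two_mul_of_dEm_lt hM (h₁ N₁ le_rfl n hn)
    have : ((S n).card : ℝ) ≤ 2 * (S N₁).card := by exact_mod_cast this
    linarith
  obtain ⟨N₂, h₂⟩ := hS (M / B) (div_pos hM hB)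
  refine ⟨max N₁ N₂, fun n hn => (card_eq_of_dEm_mul_lt hM (hbound _ (le_max_left _ _))
    (hbound n (le_of_max_le_left hn)) ?_).symm⟩
  rw [← lt_div_iff₀ hB]
  exact h₂ _ (le_max_right _ _) n (le_of_max_le_right hn)

end Cardinality

section Completeness

variable {X : Type*} [MetricSpace X] {M : ℝ}

theorem exists_ofFn_seq_of_dE_lt {T : ℕ → Multiset X} {k : ℕ} (hk : ∀ n, (T n).card = k)
    {b : ℕ → ℝ} (hb : ∀ n, dE M (T n) (T (n + 1)) < b n) :
    ∃ f : ℕ → Fin k → X, (∀ n, (List.ofFn (f n) : Multiset X) = T n) ∧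
      ∀ n, ∑ i, dist (f n i) (f (n + 1) i) < b n := by
  have hnext : ∀ n (g : {g : Fin k → X // (List.ofFn g : Multiset X) = T n}),
      ∃ g' : Fin k → X, (List.ofFn g' : Multiset X) = T (n + 1) ∧
        ∑ i, dist (g.1 i) (g' i) < b n :=
    fun n g => exists_sum_dist_lt_of_dE_lt ((hk n).trans (hk (n + 1)).symm) g.2 (hb n)
  choose next hnext_eq hnext_lt using hnext
  obtain ⟨f₀, hf₀⟩ := Multiset.exists_ofFn_eq (hk 0)
  let F : ∀ n, {g : Fin k → X // (List.ofFn g : Multiset X) = T n} :=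
    fun n => Nat.rec ⟨f₀, hf₀⟩ (fun n g => ⟨next n g, hnext_eq n g⟩) n
  exact ⟨fun n => (F n).1, fun n => (F n).2, fun n => hnext_lt n (F n)⟩

theorem exists_tendsToWith_dE_of_card_eq [CompleteSpace X] {S : ℕ → Multiset X} {k : ℕ}
    (hk : ∀ n, (S n).card = k) (hS : IsCauchyWith (dE M) S) :
    ∃ l : Multiset X, l.card = k ∧ TendsToWith (dE M) S l := by
  obtain ⟨φ, hφ, hφS⟩ := Filter.extraction_forall_of_eventually'
    (P := fun n j => ∀ m ≥ j, dE M (S j) (S m) < (1 / 2) ^ n) fun n => by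
      obtain ⟨N, hN⟩ := hS ((1 / 2) ^ n) (by positivity)
      exact ⟨N, fun j hj m hm => hN j hj m (hj.trans hm)⟩
  obtain ⟨f, hf, hfstep⟩ := exists_ofFn_seq_of_dE_lt (fun n => hk (φ n))
    fun n => hφS n _ (hφ (Nat.lt_succ_self n)).le
  have hcauchy : ∀ i, CauchySeq fun n => f n i := fun i =>
    cauchySeq_of_le_geometric (1 / 2) 1 (by norm_num) fun n => by
      rw [one_mul]
      exact ((Finset.single_le_sum (fun j _ => dist_nonneg) (Finset.mem_univ i)).trans_lt
        (hfstep n)).le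
  choose y hy using fun i => cauchySeq_tendsto_of_complete (hcauchy i)
  have hsum : Tendsto (fun n => ∑ i, dist (f n i) (y i)) atTop (𝓝 0) := by
    simpa using tendsto_finsetSum Finset.univ fun i _ => tendsto_iff_dist_tendsto_zero.1 (hy i)
  have hlcard : (List.ofFn y : Multiset X).card = k := by simp
  refine ⟨List.ofFn y, hlcard, TendsToWith.of_isCauchyWith_of_comp
    (fun m n => dE_triangle_of_card_eq ((hk m).trans (hk n).symm) ((hk n).trans hlcard.symm))
    hS hφ fun ε hε => ?_⟩
  obtain ⟨N, hN⟩ := eventually_atTop.1 (hsum.eventually (gt_mem_nhds hε))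
  exact ⟨N, fun n hn => (dE_le_sum_dist (hf n) rfl).trans_lt (hN n hn)⟩

theorem completeSpace_of_isCompleteWith {ρ : Multiset X → Multiset X → ℝ} {δ : ℝ}
    (hδ : 0 < δ) (hsingleton : ∀ x y : X, ρ {x} {y} = dist x y)
    (hcard : ∀ x l, ρ {x} l < δ → l.card = 1) (hρ : IsCompleteWith ρ) : CompleteSpace X := by
  refine Metric.complete_of_cauchySeq_tendsto fun u hu => ?_
  obtain ⟨l, hl⟩ := hρ (fun n => {u n}) fun ε hε => by
    obtain ⟨N, hN⟩ := Metric.cauchySeq_iff.1 hu ε hε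
    exact ⟨N, fun m hm n hn => (hsingleton _ _).trans_lt (hN m hm n hn)⟩
  obtain ⟨N, hN⟩ := hl δ hδ
  obtain ⟨y, rfl⟩ := Multiset.card_eq_one.1 (hcard _ _ (hN N le_rfl))
  refine ⟨y, Metric.tendsto_atTop.2 fun ε hε => ?_⟩
  obtain ⟨K, hK⟩ := hl ε hε
  exact ⟨K, fun n hn => (hsingleton _ _).symm.trans_lt (hK n hn)⟩

theorem isCompleteWith_dE_iff (hM : 0 < M) :
    IsCompleteWith (dE (X := X) M) ↔ CompleteSpace X := by
  refine ⟨completeSpace_of_isCompleteWith hM dE_singleton fun x l h =>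
    (card_eq_of_dE_lt hM h).symm, fun _ S hS => ?_⟩
  obtain ⟨N, hN⟩ := hS.eventually_card_eq_of_dE hM
  obtain ⟨l, -, hl⟩ := exists_tendsToWith_dE_of_card_eq
    (fun n => hN (n + N) (Nat.le_add_left N n)) (hS.comp_add N)
  exact ⟨l, hl.of_comp_add⟩

theorem isCompleteWith_dEm_iff (hM : 0 < M) :
    IsCompleteWith (dEm (X := X) M) ↔ CompleteSpace X := by
  refine ⟨completeSpace_of_isCompleteWith (half_pos hM) dEm_singleton fun x l h => ?_,
    fun _ S hS => ?_⟩
  · have h2 : (l.card : ℝ) ≤ 2 := by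
      exact_mod_cast (by simpa using card_le_two_mul_of_dEm_lt hM h)
    exact (card_eq_of_dEm_mul_lt hM (by norm_num : (({x} : Multiset X).card : ℝ) ≤ 2) h2
      (by linarith)).symm
  obtain ⟨N, hN⟩ := hS.eventually_card_eq_of_dEm hM
  have hT : ∀ n, (S (n + N)).card = (S N).card := fun n => hN _ (Nat.le_add_left N n)
  rcases Nat.eq_zero_or_pos (S N).card with h0 | hpos
  · refine ⟨0, TendsToWith.of_comp_add (N := N) fun ε hε => ⟨0, fun n _ => ?_⟩⟩
    simp [Multiset.card_eq_zero.1 ((hT n).trans h0), dEm, hε]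
  have hk : (0 : ℝ) < (S N).card := by exact_mod_cast hpos
  obtain ⟨l, hl, hlim⟩ := exists_tendsToWith_dE_of_card_eq hT <| (hS.comp_add N).of_eq_mul hk
    fun m n => by rw [dEm_eq_dE_div ((hT m).trans (hT n).symm), hT, mul_div_cancel₀ _ hk.ne']
  refine ⟨l, (hlim.of_eq_mul (inv_pos.2 hk) fun n => ?_).of_comp_add⟩
  rw [dEm_eq_dE_div ((hT n).trans hl.symm), hT, div_eq_inv_mul]

end Completeness

theorem stmt_8_general {X : Type*} [MetricSpace X] (M : ℝ) (hM : 0 < M) :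
    (supD X / M ≤ 2 → (IsCompleteWith (dE (X := X) M) ↔ CompleteSpace X)) ∧
    (supD X / M ≤ 1 → (IsCompleteWith (dEm (X := X) M) ↔ CompleteSpace X)) :=
  ⟨fun _ => isCompleteWith_dE_iff hM, fun _ => isCompleteWith_dEm_iff hM⟩

/-- If `(sup d)/M ≤ 2` then `d_E` is a complete metric on `E` iff `d` is complete;
if `(sup d)/M ≤ 1` then `d_Em` is a complete metric on `E` iff `d` is complete. -/
theorem stmt_8 {X : Type*} [MetricSpace X] [Nontrivial X] (M : ℝ) (hM : 0 < M)
    (hbdd : ∃ B : ℝ, ∀ x y : X, dist x y ≤ B) :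
    (supD X / M ≤ 2 → (IsCompleteWith (dE (X := X) M) ↔ CompleteSpace X)) ∧
    (supD X / M ≤ 1 → (IsCompleteWith (dEm (X := X) M) ↔ CompleteSpace X)) :=
  stmt_8_general M hM
end

section
/- If the metric d on X is unbounded, then d_A is not a metric on A for any choice of M>0. If d is bounded, then d_A is a metric on A if and only if θ = (sup d)/M ≤ 2. -/
/-- The setoid on `X × ℕ` identifying all points of the form `(x, 0)`. -/
def ARel (X : Type*) : Setoid (X × ℕ) where
  r p q := p = q ∨ (p.2 = 0 ∧ q.2 = 0)
  iseqv := by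
    refine ⟨fun p => Or.inl rfl, ?_, ?_⟩
    · rintro p q (rfl | h)
      · exact Or.inl rfl
      · exact Or.inr ⟨h.2, h.1⟩
    · rintro p q r (rfl | h) (rfl | h') <;> tauto

/-- The space `A`: the quotient of `X × ℕ` identifying all `(x, 0)` to one point. -/
abbrev SpaceA (X : Type*) : Type _ := Quotient (ARel X)

/-- The class `r eₓ` of `(x, r)` in `A`. -/
def aMk {X : Type*} (x : X) (r : ℕ) : SpaceA X := Quotient.mk (ARel X) (x, r)

/-- The distinguished point `e₀` of `A`. -/
noncomputable def e0A (X : Type*) [Nonempty X] : SpaceA X :=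
  aMk (Classical.arbitrary X) 0

/-- The multiplicity of a point of `A`. -/
def cardA {X : Type*} : SpaceA X → ℕ :=
  Quotient.lift (fun p => p.2) (by rintro p q (rfl | ⟨h1, h2⟩) <;> simp_all)

/-- The distance `d_A(r eₓ, t e_z) = M|t - r| + min r t * d(x,z)` on `A`. -/
noncomputable def dA {X : Type*} [MetricSpace X] (M : ℝ) : SpaceA X → SpaceA X → ℝ :=
  Quotient.lift₂
    (fun p q => M * |(q.2 : ℝ) - (p.2 : ℝ)| + (min p.2 q.2 : ℕ) * dist p.1 q.1)
    (by rintro p q p' q' (rfl | ⟨h1, h2⟩) (rfl | ⟨h3, h4⟩) <;> simp_all)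

/-- The mean distance `d_Am = d_A / max r t` on `A` (with value `0` at `(e₀, e₀)`). -/
noncomputable def dAm {X : Type*} [MetricSpace X] (M : ℝ) (u v : SpaceA X) : ℝ :=
  dA M u v / (max (cardA u) (cardA v) : ℕ)


lemma dA_mk {X : Type*} [MetricSpace X] (M : ℝ) (x z : X) (r t : ℕ) :
    dA M (aMk x r) (aMk z t) = M * |(t : ℝ) - (r : ℝ)| + ((min r t : ℕ) : ℝ) * dist x z :=
  rfl

lemma key1 {M r s t dxz dxy dyz : ℝ} (hM : 0 ≤ M) (hs : 0 ≤ s)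
    (h1 : 0 ≤ dxy) (h2 : 0 ≤ dyz) (h3 : dxz ≤ dxy + dyz) (h4 : dxz ≤ 2 * M)
    (hrt : r ≤ t) (hr : 0 ≤ r) :
    M * (t - r) + r * dxz ≤
      (M * |s - r| + min r s * dxy) + (M * |t - s| + min s t * dyz) := by
  rcases le_total s r with hsr | hrs
  · rw [min_eq_right hsr, min_eq_left (hsr.trans hrt), abs_of_nonpos (by linarith),
      abs_of_nonneg (by linarith)]
    nlinarith [mul_le_mul_of_nonneg_left h3 hs,
      mul_le_mul_of_nonneg_right h4 (sub_nonneg.2 hsr)]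
  · rcases le_total s t with hst | hts
    · rw [min_eq_left hrs, min_eq_left hst, abs_of_nonneg (by linarith),
        abs_of_nonneg (by linarith)]
      nlinarith [mul_le_mul_of_nonneg_left h3 hr,
        mul_le_mul_of_nonneg_right h2 (sub_nonneg.2 hrs)]
    · rw [min_eq_left (hrt.trans hts), min_eq_right hts, abs_of_nonneg (by linarith),
        abs_of_nonpos (by linarith)]
      nlinarith [mul_le_mul_of_nonneg_left h3 hr,
        mul_le_mul_of_nonneg_right h2 (sub_nonneg.2 hrt)]

lemma key {M r s t dxz dxy dyz : ℝ} (hM : 0 ≤ M) (hr : 0 ≤ r) (hs : 0 ≤ s) (ht : 0 ≤ t)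
    (h1 : 0 ≤ dxy) (h2 : 0 ≤ dyz) (h3 : dxz ≤ dxy + dyz) (h4 : dxz ≤ 2 * M) :
    M * |t - r| + min r t * dxz ≤
      (M * |s - r| + min r s * dxy) + (M * |t - s| + min s t * dyz) := by
  rcases le_total r t with hrt | htr
  · rw [abs_of_nonneg (by linarith), min_eq_left hrt]
    exact key1 hM hs h1 h2 h3 h4 hrt hr
  · rw [abs_of_nonpos (by linarith), min_eq_right htr]
    have := key1 (r := t) (t := r) (s := s) (dxz := dxz) (dxy := dyz) (dyz := dxy)
      hM hs h2 h1 (by linarith) h4 htr ht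
    rw [abs_sub_comm s t, abs_sub_comm r s, min_comm t s, min_comm s r] at this
    linarith

lemma dA_triangle {X : Type*} [MetricSpace X] {M : ℝ} (hM : 0 ≤ M)
    (h2M : ∀ x y : X, dist x y ≤ 2 * M) (p q w : SpaceA X) :
    dA M p w ≤ dA M p q + dA M q w := by
  induction p using Quotient.ind
  induction q using Quotient.ind
  induction w using Quotient.ind
  rename_i p q w
  obtain ⟨x, r⟩ := p; obtain ⟨y, s⟩ := q; obtain ⟨z, t⟩ := w
  show M * |(t : ℝ) - r| + ((min r t : ℕ) : ℝ) * dist x z ≤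
      (M * |(s : ℝ) - r| + ((min r s : ℕ) : ℝ) * dist x y) +
      (M * |(t : ℝ) - s| + ((min s t : ℕ) : ℝ) * dist y z)
  push_cast
  exact key hM (Nat.cast_nonneg r) (Nat.cast_nonneg s) (Nat.cast_nonneg t)
    dist_nonneg dist_nonneg (dist_triangle x y z) (h2M x z)

lemma isMetric_of_le {X : Type*} [MetricSpace X] {M : ℝ} (hM : 0 < M)
    (h2M : ∀ x y : X, dist x y ≤ 2 * M) : IsMetric (dA (X := X) M) := by
  refine ⟨?_, ?_, dA_triangle hM.le h2M⟩
  · intro p q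
    induction p using Quotient.ind
    induction q using Quotient.ind
    rename_i p q
    obtain ⟨x, r⟩ := p; obtain ⟨z, t⟩ := q
    show M * |(t : ℝ) - r| + ((min r t : ℕ) : ℝ) * dist x z = 0 ↔ _
    constructor
    · intro h0
      have ha : (0:ℝ) ≤ M * |(t : ℝ) - r| := by positivity
      have hb : (0:ℝ) ≤ ((min r t : ℕ) : ℝ) * dist x z := by positivity
      have ha0 : M * |(t : ℝ) - r| = 0 := by linarith
      have hb0 : ((min r t : ℕ) : ℝ) * dist x z = 0 := by linarith
      have habs : |(t : ℝ) - r| = 0 := by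
        rcases mul_eq_zero.1 ha0 with h | h
        · exact absurd h (ne_of_gt hM)
        · exact h
      have hrt : r = t := by
        have : (t : ℝ) = r := by
          have := abs_eq_zero.1 habs; linarith
        exact_mod_cast this.symm
      subst hrt
      rcases Nat.eq_zero_or_pos r with h0' | hpos
      · subst h0'
        exact Quotient.sound (Or.inr ⟨rfl, rfl⟩)
      · have hdist : dist x z = 0 := by
          rcases mul_eq_zero.1 hb0 with h | h
          · exfalso
            have : min r r = 0 := by exact_mod_cast h
            omega
          · exact h
        have : x = z := by rwa [dist_eq_zero] at hdist
        subst this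
        exact rfl
    · intro h
      have := Quotient.exact h
      rcases this with h | ⟨h1, h2⟩
      · obtain ⟨rfl, rfl⟩ := Prod.mk.injEq .. ▸ (Prod.ext_iff.1 h)
        simp
      · simp only at h1 h2
        subst h1; subst h2
        simp
  · intro p q
    induction p using Quotient.ind
    induction q using Quotient.ind
    rename_i p q
    obtain ⟨x, r⟩ := p; obtain ⟨z, t⟩ := q
    show M * |(t : ℝ) - r| + ((min r t : ℕ) : ℝ) * dist x z =
      M * |(r : ℝ) - t| + ((min t r : ℕ) : ℝ) * dist z x
    rw [abs_sub_comm, min_comm, dist_comm]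

lemma not_isMetric_of_big {X : Type*} [MetricSpace X] {M : ℝ} {x z : X}
    (hxz : 2 * M < dist x z) : ¬ IsMetric (dA (X := X) M) := by
  intro h
  have := h.2.2 (aMk x 1) (aMk x 0) (aMk z 1)
  rw [dA_mk, dA_mk, dA_mk] at this
  simp only [Nat.cast_one, Nat.cast_zero] at this
  norm_num at this
  linarith

/-- `d_A` is not a metric on `A` for any `M > 0` if `d` is unbounded; if `d` is
bounded, `d_A` is a metric on `A` iff `(sup d)/M ≤ 2`. -/
theorem stmt_9 {X : Type*} [MetricSpace X] [Nontrivial X] :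
    ((¬ ∃ B : ℝ, ∀ x y : X, dist x y ≤ B) →
      ∀ M : ℝ, 0 < M → ¬ IsMetric (dA (X := X) M)) ∧
    ((∃ B : ℝ, ∀ x y : X, dist x y ≤ B) →
      ∀ M : ℝ, 0 < M → (IsMetric (dA (X := X) M) ↔ supD X / M ≤ 2)) := by
  constructor
  · intro hub M hM
    push_neg at hub
    obtain ⟨x, z, hxz⟩ := hub (2 * M)
    exact not_isMetric_of_big hxz
  · rintro ⟨B, hB⟩ M hM
    have hne : {r : ℝ | ∃ x y : X, dist x y = r}.Nonempty :=
      ⟨0, Classical.arbitrary X, Classical.arbitrary X, dist_self _⟩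
    have hbdd : BddAbove {r : ℝ | ∃ x y : X, dist x y = r} :=
      ⟨B, by rintro r ⟨x, y, rfl⟩; exact hB x y⟩
    constructor
    · intro hmet
      rw [div_le_iff₀ hM]
      refine csSup_le hne ?_
      rintro r ⟨x, z, rfl⟩
      by_contra hlt
      push_neg at hlt
      exact not_isMetric_of_big hlt hmet
    · intro hθ
      have hsup : supD X ≤ 2 * M := by rwa [div_le_iff₀ hM] at hθ
      exact isMetric_of_le hM fun x y => le_trans (le_csSup hbdd ⟨x, y, rfl⟩) hsup
end

section
/- If the metric d on X is unbounded, then d_Am is not a metric on A for any choice of M>0. If d is bounded, then d_Am is a metric on A if and only if θ = (sup d)/M ≤ 2. -/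
lemma keyIneq (M a b c d1 d2 d : ℝ) (ha : 0 < a) (hb : 0 < b) (hc : 0 < c)
    (hM : 0 < M) (hd1 : 0 ≤ d1) (hd2 : 0 ≤ d2) (hd : 0 ≤ d)
    (htri : d ≤ d1 + d2) (hB : d ≤ 2*M) (hB1 : d1 ≤ 2*M) (hB2 : d2 ≤ 2*M) :
    (M*|c-a| + min a c * d)/max a c ≤
      (M*|b-a| + min a b * d1)/max a b + (M*|c-b| + min b c * d2)/max b c := by
  rcases le_total a b with hab | hab <;> rcases le_total b c with hbc | hbc <;>
    rcases le_total a c with hac | hac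
  · -- a ≤ b ≤ c
    rw [abs_of_nonneg (by linarith), min_eq_left hac, max_eq_right hac,
      abs_of_nonneg (by linarith), min_eq_left hab, max_eq_right hab,
      abs_of_nonneg (by linarith), min_eq_left hbc, max_eq_right hbc,
      div_add_div _ _ hb.ne' hc.ne', div_le_div_iff₀ hc (mul_pos hb hc)]
    nlinarith [mul_nonneg (mul_nonneg (sub_nonneg.2 hab) (sub_nonneg.2 hbc)) (mul_pos hM hc).le,
      mul_nonneg (mul_nonneg (mul_nonneg (sub_nonneg.2 hbc) ha.le) hd1) hc.le,
      mul_nonneg (mul_nonneg (mul_nonneg (sub_nonneg.2 hab) hb.le) hd2) hc.le,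
      mul_nonneg (mul_nonneg (mul_nonneg ha.le hb.le) (sub_nonneg.2 htri)) hc.le]
  · -- a ≤ b, b ≤ c, c ≤ a : all equal
    have h1 : a = b := le_antisymm hab (by linarith)
    have h2 : b = c := le_antisymm hbc (by linarith)
    subst h1; subst h2
    simp only [sub_self, abs_zero, min_self, max_self]
    rw [div_add_div _ _ ha.ne' ha.ne', div_le_div_iff₀ ha (mul_pos ha ha)]
    nlinarith [mul_nonneg (mul_nonneg ha.le ha.le) (mul_nonneg ha.le (sub_nonneg.2 htri))]
  · -- a ≤ b, c ≤ b, a ≤ c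
    rw [abs_of_nonneg (by linarith), min_eq_left hac, max_eq_right hac,
      abs_of_nonneg (by linarith), min_eq_left hab, max_eq_right hab,
      abs_of_nonpos (by linarith), min_eq_right hbc, max_eq_left hbc,
      div_add_div _ _ hb.ne' hb.ne', div_le_div_iff₀ hc (mul_pos hb hb)]
    -- abd ≤ acd1 + c² d2 + M(b−c)(a+c)   (times b)
    nlinarith [mul_nonneg (mul_nonneg (sub_nonneg.2 hbc) (by linarith : (0:ℝ) ≤ a + c)) (mul_pos hM hb).le,
      mul_nonneg (mul_nonneg (mul_nonneg ha.le hc.le) (sub_nonneg.2 htri)) hb.le,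
      mul_nonneg (mul_nonneg (mul_nonneg (sub_nonneg.2 hac) hc.le) hd2) hb.le,
      mul_nonneg (mul_nonneg (mul_nonneg ha.le (sub_nonneg.2 hbc)) (by linarith : 0 ≤ 2*M - d)) hb.le]
  · -- a ≤ b, c ≤ b, c ≤ a  (mirror of previous with roles swapped)
    rw [abs_of_nonpos (by linarith), min_eq_right hac, max_eq_left hac,
      abs_of_nonneg (by linarith), min_eq_left hab, max_eq_right hab,
      abs_of_nonpos (by linarith), min_eq_right hbc, max_eq_left hbc,
      div_add_div _ _ hb.ne' hb.ne', div_le_div_iff₀ ha (mul_pos hb hb)]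
    nlinarith [mul_nonneg (mul_nonneg (sub_nonneg.2 hab) (by linarith : (0:ℝ) ≤ a + c)) (mul_pos hM hb).le,
      mul_nonneg (mul_nonneg (mul_nonneg ha.le hc.le) (sub_nonneg.2 htri)) hb.le,
      mul_nonneg (mul_nonneg (mul_nonneg (sub_nonneg.2 hac) ha.le) hd1) hb.le,
      mul_nonneg (mul_nonneg (mul_nonneg hc.le (sub_nonneg.2 hab)) (by linarith : 0 ≤ 2*M - d)) hb.le,
      mul_nonneg (mul_nonneg (mul_nonneg (sub_nonneg.2 hac) (sub_nonneg.2 hab)) hM.le) hb.le]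
  · -- b ≤ a, b ≤ c, a ≤ c
    rw [abs_of_nonneg (by linarith), min_eq_left hac, max_eq_right hac,
      abs_of_nonpos (by linarith), min_eq_right hab, max_eq_left hab,
      abs_of_nonneg (by linarith), min_eq_left hbc, max_eq_right hbc,
      div_add_div _ _ ha.ne' hc.ne', div_le_div_iff₀ hc (mul_pos ha hc)]
    -- a²d ≤ M(a−b)(a+c) + bc d1 + ab d2   (times c)
    nlinarith [mul_nonneg (mul_nonneg (sub_nonneg.2 hab) (sub_nonneg.2 hac)) (mul_pos hM hc).le,
      mul_nonneg (mul_nonneg (mul_nonneg ha.le hb.le) (sub_nonneg.2 htri)) hc.le,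
      mul_nonneg (mul_nonneg (mul_nonneg (sub_nonneg.2 hac) hb.le) hd1) hc.le,
      mul_nonneg (mul_nonneg (mul_nonneg ha.le (sub_nonneg.2 hab)) (by linarith : 0 ≤ 2*M - d)) hc.le]
  · -- b ≤ a, b ≤ c, c ≤ a
    rw [abs_of_nonpos (by linarith), min_eq_right hac, max_eq_left hac,
      abs_of_nonpos (by linarith), min_eq_right hab, max_eq_left hab,
      abs_of_nonneg (by linarith), min_eq_left hbc, max_eq_right hbc,
      div_add_div _ _ ha.ne' hc.ne', div_le_div_iff₀ ha (mul_pos ha hc)]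
    nlinarith [mul_nonneg (mul_nonneg (sub_nonneg.2 hbc) (sub_nonneg.2 hac)) (mul_pos hM ha).le,
      mul_nonneg (mul_nonneg (mul_nonneg hc.le hb.le) (sub_nonneg.2 htri)) ha.le,
      mul_nonneg (mul_nonneg (mul_nonneg (sub_nonneg.2 hac) hb.le) hd2) ha.le,
      mul_nonneg (mul_nonneg (mul_nonneg hc.le (sub_nonneg.2 hbc)) (by linarith : 0 ≤ 2*M - d)) ha.le]
  · -- contradiction-ish: b ≤ a, c ≤ b, a ≤ c : all equal
    have h1 : a = b := le_antisymm (by linarith) hab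
    have h2 : b = c := le_antisymm (by linarith) hbc
    subst h1; subst h2
    simp only [sub_self, abs_zero, min_self, max_self]
    rw [div_add_div _ _ ha.ne' ha.ne', div_le_div_iff₀ ha (mul_pos ha ha)]
    nlinarith [mul_nonneg (mul_nonneg ha.le ha.le) (mul_nonneg ha.le (sub_nonneg.2 htri))]
  · -- c ≤ b ≤ a
    rw [abs_of_nonpos (by linarith), min_eq_right hac, max_eq_left hac,
      abs_of_nonpos (by linarith), min_eq_right hab, max_eq_left hab,
      abs_of_nonpos (by linarith), min_eq_right hbc, max_eq_left hbc,
      div_add_div _ _ ha.ne' hb.ne', div_le_div_iff₀ ha (mul_pos ha hb)]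
    nlinarith [mul_nonneg (mul_nonneg (sub_nonneg.2 hbc) (sub_nonneg.2 hab)) (mul_pos hM ha).le,
      mul_nonneg (mul_nonneg (mul_nonneg hc.le hb.le) (sub_nonneg.2 htri)) ha.le,
      mul_nonneg (mul_nonneg (mul_nonneg (sub_nonneg.2 hab) hc.le) hd2) ha.le,
      mul_nonneg (mul_nonneg (mul_nonneg (sub_nonneg.2 hbc) hb.le) hd1) ha.le]


section Aux

lemma keyIneq' : True := trivial

variable {X : Type*} [MetricSpace X]

lemma dAm_mk_aux (M : ℝ) (x y : X) (r s : ℕ) :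
    dAm M (aMk x r) (aMk y s) =
      (M * |(s : ℝ) - (r : ℝ)| + min (r : ℝ) (s : ℝ) * dist x y) / max (r : ℝ) (s : ℝ) := by
  show (M * |(s : ℝ) - (r : ℝ)| + ((min r s : ℕ) : ℝ) * dist x y) / ((max r s : ℕ) : ℝ) = _
  push_cast
  rfl

lemma aMk_zero_aux [Nonempty X] (x : X) : aMk x 0 = e0A X :=
  Quotient.sound (Or.inr ⟨rfl, rfl⟩)

lemma dAm_nonneg_aux (M : ℝ) (hM : 0 ≤ M) (u v : SpaceA X) : 0 ≤ dAm M u v := by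
  induction u using Quotient.ind with | _ p =>
  induction v using Quotient.ind with | _ q =>
  obtain ⟨x, r⟩ := p; obtain ⟨y, s⟩ := q
  rw [show (Quotient.mk (ARel X) (x, r)) = aMk x r from rfl,
    show (Quotient.mk (ARel X) (y, s)) = aMk y s from rfl, dAm_mk_aux]
  apply div_nonneg
  · positivity
  · positivity

lemma dAm_comm_aux (M : ℝ) (u v : SpaceA X) : dAm M u v = dAm M v u := by
  induction u using Quotient.ind with | _ p =>
  induction v using Quotient.ind with | _ q =>
  obtain ⟨x, r⟩ := p; obtain ⟨y, s⟩ := q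
  rw [show (Quotient.mk (ARel X) (x, r)) = aMk x r from rfl,
    show (Quotient.mk (ARel X) (y, s)) = aMk y s from rfl, dAm_mk_aux, dAm_mk_aux,
    dist_comm, abs_sub_comm, min_comm, max_comm]

lemma dAm_eq_zero_iff_aux (M : ℝ) (hM : 0 < M) (u v : SpaceA X) :
    dAm M u v = 0 ↔ u = v := by
  induction u using Quotient.ind with | _ p =>
  induction v using Quotient.ind with | _ q =>
  obtain ⟨x, r⟩ := p; obtain ⟨y, s⟩ := q
  rw [show (Quotient.mk (ARel X) (x, r)) = aMk x r from rfl,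
    show (Quotient.mk (ARel X) (y, s)) = aMk y s from rfl, dAm_mk_aux]
  constructor
  · intro h
    rcases Nat.eq_zero_or_pos (max r s) with h0 | h0
    · have hr : r = 0 := by omega
      have hs : s = 0 := by omega
      subst hr; subst hs
      exact Quotient.sound (Or.inr ⟨rfl, rfl⟩)
    · have hden : (0 : ℝ) < max (r : ℝ) (s : ℝ) := by
        have : (0 : ℝ) < ((max r s : ℕ) : ℝ) := by exact_mod_cast h0
        rwa [Nat.cast_max] at this
      have hnum : M * |(s : ℝ) - (r : ℝ)| + min (r : ℝ) (s : ℝ) * dist x y = 0 := by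
        rcases div_eq_zero_iff.mp h with h' | h'
        · exact h'
        · exact absurd h' hden.ne'
      have h1 : 0 ≤ M * |(s : ℝ) - (r : ℝ)| := by positivity
      have h2 : 0 ≤ min (r : ℝ) (s : ℝ) * dist x y := by positivity
      have habs : M * |(s : ℝ) - (r : ℝ)| = 0 := by linarith
      have hrs : (s : ℝ) = (r : ℝ) := by
        have := (mul_eq_zero.mp habs).resolve_left hM.ne'
        have := abs_eq_zero.mp this
        linarith
      have hrs' : r = s := by exact_mod_cast hrs.symm
      subst hrs'
      have hrpos : 0 < r := by omega
      have hmin : min (r : ℝ) (r : ℝ) = (r : ℝ) := min_self _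
      have hd : dist x y = 0 := by
        have h3 : min (r : ℝ) (r : ℝ) * dist x y = 0 := by linarith
        rw [hmin] at h3
        rcases mul_eq_zero.mp h3 with h4 | h4
        · exact absurd h4 (by exact_mod_cast hrpos.ne')
        · exact h4
      have : x = y := dist_eq_zero.mp hd
      subst this
      rfl
  · intro h
    rcases Quotient.exact h with h' | h'
    · obtain ⟨h1, h2⟩ := Prod.mk.inj h'
      subst h1; subst h2
      simp
    · obtain ⟨h1, h2⟩ := h'
      simp only at h1 h2
      subst h1; subst h2
      simp

lemma dAm_bound_aux (M : ℝ) (hM : 0 < M) (hbd : ∀ x y : X, dist x y ≤ 2 * M)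
    (x y : X) (r s : ℕ) :
    dAm M (aMk x r) (aMk y s) ≤ 2 * M := by
  rw [dAm_mk_aux]
  rcases Nat.eq_zero_or_pos (max r s) with h0 | h0
  · have hr : r = 0 := by omega
    have hs : s = 0 := by omega
    subst hr; subst hs
    simp
    positivity
  · have hden : (0 : ℝ) < max (r : ℝ) (s : ℝ) := by
      have : (0 : ℝ) < ((max r s : ℕ) : ℝ) := by exact_mod_cast h0
      rwa [Nat.cast_max] at this
    rw [div_le_iff₀ hden]
    have h1 : |(s : ℝ) - (r : ℝ)| = max (r : ℝ) (s : ℝ) - min (r : ℝ) (s : ℝ) := by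
      rw [max_sub_min_eq_abs, abs_sub_comm]
    rw [h1]
    have h2 : 0 ≤ min (r : ℝ) (s : ℝ) := le_min (Nat.cast_nonneg r) (Nat.cast_nonneg s)
    have h3 : min (r : ℝ) (s : ℝ) ≤ max (r : ℝ) (s : ℝ) := min_le_max
    nlinarith [hbd x y, dist_nonneg (x := x) (y := y), mul_nonneg h2 (dist_nonneg (x := x) (y := y))]

end Aux

section Aux2

variable {X : Type*} [MetricSpace X]

lemma dAm_zero_left_aux (M : ℝ) (hM : 0 < M) (x y : X) (t : ℕ) (ht : 0 < t) :
    dAm M (aMk x 0) (aMk y t) = M := by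
  rw [dAm_mk_aux]
  have htr : (0 : ℝ) < (t : ℝ) := by exact_mod_cast ht
  rw [Nat.cast_zero, min_eq_left htr.le, max_eq_right htr.le, sub_zero,
    abs_of_nonneg htr.le, zero_mul, add_zero, mul_div_assoc, div_self htr.ne', mul_one]

lemma dAm_mk_zero_zero_aux (M : ℝ) (x y : X) :
    dAm M (aMk x 0) (aMk y 0) = 0 := by
  rw [dAm_mk_aux]; simp

lemma dAm_triangle_aux (M : ℝ) (hM : 0 < M) (hbd : ∀ x y : X, dist x y ≤ 2 * M)
    (u v w : SpaceA X) : dAm M u w ≤ dAm M u v + dAm M v w := by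
  induction u using Quotient.ind with | _ p =>
  induction v using Quotient.ind with | _ q =>
  induction w using Quotient.ind with | _ o =>
  obtain ⟨x, r⟩ := p; obtain ⟨y, s⟩ := q; obtain ⟨z, t⟩ := o
  rw [show (Quotient.mk (ARel X) (x, r)) = aMk x r from rfl,
    show (Quotient.mk (ARel X) (y, s)) = aMk y s from rfl,
    show (Quotient.mk (ARel X) (z, t)) = aMk z t from rfl]
  rcases Nat.eq_zero_or_pos r with hr | hr <;> rcases Nat.eq_zero_or_pos t with ht | ht
  · -- r = 0, t = 0
    subst hr; subst ht
    rw [dAm_mk_zero_zero_aux]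
    have := dAm_nonneg_aux M hM.le (aMk x 0) (aMk y s)
    have := dAm_nonneg_aux M hM.le (aMk y s) (aMk z 0)
    linarith
  · -- r = 0, t > 0
    subst hr
    rw [dAm_zero_left_aux M hM x z t ht]
    rcases Nat.eq_zero_or_pos s with hs | hs
    · subst hs
      rw [dAm_mk_zero_zero_aux, dAm_zero_left_aux M hM y z t ht]
      linarith
    · rw [dAm_zero_left_aux M hM x y s hs]
      have := dAm_nonneg_aux M hM.le (aMk y s) (aMk z t)
      linarith
  · -- r > 0, t = 0
    subst ht
    rw [dAm_comm_aux M (aMk x r) (aMk z 0), dAm_zero_left_aux M hM z x r hr]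
    rcases Nat.eq_zero_or_pos s with hs | hs
    · subst hs
      rw [dAm_comm_aux M (aMk x r) (aMk y 0), dAm_zero_left_aux M hM y x r hr,
        dAm_mk_zero_zero_aux]
      linarith
    · rw [dAm_comm_aux M (aMk y s) (aMk z 0), dAm_zero_left_aux M hM z y s hs]
      have := dAm_nonneg_aux M hM.le (aMk x r) (aMk y s)
      linarith
  · -- r > 0, t > 0
    rcases Nat.eq_zero_or_pos s with hs | hs
    · subst hs
      rw [dAm_comm_aux M (aMk x r) (aMk y 0), dAm_zero_left_aux M hM y x r hr,
        dAm_zero_left_aux M hM y z t ht]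
      have := dAm_bound_aux M hM hbd x z r t
      linarith
    · rw [dAm_mk_aux, dAm_mk_aux, dAm_mk_aux]
      exact keyIneq M (r : ℝ) (s : ℝ) (t : ℝ) (dist x y) (dist y z) (dist x z)
        (by exact_mod_cast hr) (by exact_mod_cast hs) (by exact_mod_cast ht) hM
        dist_nonneg dist_nonneg dist_nonneg (dist_triangle x y z)
        (hbd x z) (hbd x y) (hbd y z)

end Aux2

/-- `d_Am` is not a metric on `A` for any `M > 0` if `d` is unbounded; if `d` is
bounded, `d_Am` is a metric on `A` iff `(sup d)/M ≤ 2` (note: `≤ 2`, not `≤ 1`). -/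
theorem stmt_10 {X : Type*} [MetricSpace X] [Nontrivial X] :
    ((¬ ∃ B : ℝ, ∀ x y : X, dist x y ≤ B) →
      ∀ M : ℝ, 0 < M → ¬ IsMetric (dAm (X := X) M)) ∧
    ((∃ B : ℝ, ∀ x y : X, dist x y ≤ B) →
      ∀ M : ℝ, 0 < M → (IsMetric (dAm (X := X) M) ↔ supD X / M ≤ 2)) := by
  have key1 : ∀ M : ℝ, 0 < M → IsMetric (dAm (X := X) M) → ∀ x z : X, dist x z ≤ 2 * M := by
    intro M hM hmet x z
    have h1 : dAm M (aMk x 1) (aMk z 1) = dist x z := by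
      rw [dAm_mk_aux]; norm_num
    have h2 : dAm M (aMk x 1) (e0A X) = M := by
      show dAm M (aMk x 1) (aMk (Classical.arbitrary X) 0) = M
      rw [dAm_comm_aux, dAm_zero_left_aux M hM _ _ 1 one_pos]
    have h3 : dAm M (e0A X) (aMk z 1) = M := by
      show dAm M (aMk (Classical.arbitrary X) 0) (aMk z 1) = M
      rw [dAm_zero_left_aux M hM _ _ 1 one_pos]
    have htr := hmet.2.2 (aMk x 1) (e0A X) (aMk z 1)
    rw [h1, h2, h3] at htr
    linarith
  constructor
  · intro hub M hM hmet
    push_neg at hub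
    obtain ⟨x, z, hxz⟩ := hub (2 * M)
    exact absurd (key1 M hM hmet x z) (not_le.mpr hxz)
  · rintro ⟨B, hB⟩ M hM
    have hbdd : BddAbove {r : ℝ | ∃ x y : X, dist x y = r} :=
      ⟨B, by rintro r ⟨x, y, rfl⟩; exact hB x y⟩
    have hne : {r : ℝ | ∃ x y : X, dist x y = r}.Nonempty :=
      ⟨0, Classical.arbitrary X, Classical.arbitrary X, dist_self _⟩
    constructor
    · intro hmet
      rw [div_le_iff₀ hM]
      have : supD X ≤ 2 * M := by
        simp only [supD]
        exact csSup_le hne (by rintro r ⟨x, y, rfl⟩; exact key1 M hM hmet x y)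
      linarith
    · intro hθ
      have hbd : ∀ x y : X, dist x y ≤ 2 * M := by
        intro x y
        have h1 : dist x y ≤ supD X := by
          simp only [supD]
          exact le_csSup hbdd ⟨x, y, rfl⟩
        rw [div_le_iff₀ hM] at hθ
        linarith
      exact ⟨fun u v => dAm_eq_zero_iff_aux M hM u v, fun u v => dAm_comm_aux M u v,
        fun u v w => dAm_triangle_aux M hM hbd u v w⟩
end

section
/- Assume d is bounded with θ ≤ 2, so that d_A and d_Am are metrics on A. Then d_A and d_Am induce the same topology on A, and this topology coincides with the quotient topology on A inherited from X×ℕ (where X carries its metric topology and ℕ the discrete topology). -/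
section Aux
variable {X : Type*} [MetricSpace X]

lemma dA_mk_mk (M : ℝ) (x z : X) (r t : ℕ) :
    dA M (aMk x r) (aMk z t) = M * |(t:ℝ) - (r:ℝ)| + ((min r t : ℕ) : ℝ) * dist x z := rfl

lemma dAm_mk_mk (M : ℝ) (x z : X) (r t : ℕ) :
    dAm M (aMk x r) (aMk z t) =
      (M * |(t:ℝ) - (r:ℝ)| + ((min r t : ℕ) : ℝ) * dist x z) / ((max r t : ℕ) : ℝ) := rfl

lemma isOpen_prod_bot {S : Set (X × ℕ)} (h : ∀ n, IsOpen {x : X | (x, n) ∈ S}) :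
    @IsOpen (X × ℕ) (@instTopologicalSpaceProd X ℕ inferInstance ⊥) S := by
  letI : TopologicalSpace ℕ := ⊥
  have hS : S = ⋃ n : ℕ, {x : X | (x, n) ∈ S} ×ˢ ({n} : Set ℕ) := by
    ext ⟨x, n⟩
    simp only [Set.mem_iUnion, Set.mem_prod, Set.mem_setOf_eq, Set.mem_singleton_iff]
    exact ⟨fun h => ⟨n, h, rfl⟩, fun ⟨m, hm, hmn⟩ => hmn ▸ hm⟩
  rw [hS]
  exact isOpen_iUnion fun n =>
    (h n).prod (@isOpen_discrete ℕ ⊥ (discreteTopology_bot ℕ) {n})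

lemma cont_dA (M : ℝ) (u : SpaceA X) (n : ℕ) :
    Continuous fun x : X => dA M u (aMk x n) := by
  induction u using Quotient.inductionOn with
  | h p =>
    show Continuous fun x : X =>
      M * |(n:ℝ) - (p.2 : ℝ)| + ((min p.2 n : ℕ) : ℝ) * dist p.1 x
    fun_prop

lemma cont_dAm (M : ℝ) (u : SpaceA X) (n : ℕ) :
    Continuous fun x : X => dAm M u (aMk x n) := by
  have h : (fun x : X => dAm M u (aMk x n)) =
      fun x => dA M u (aMk x n) / ((max (cardA u) n : ℕ) : ℝ) := rfl
  rw [h]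
  exact (cont_dA M u n).div_const _

lemma dA_self (M : ℝ) (u : SpaceA X) : dA M u u = 0 := by
  obtain ⟨⟨x, r⟩, rfl⟩ := Quotient.exists_rep u
  show M * |(r:ℝ) - (r:ℝ)| + ((min r r : ℕ) : ℝ) * dist x x = 0
  simp

lemma dAm_self (M : ℝ) (u : SpaceA X) : dAm M u u = 0 := by
  unfold dAm
  rw [dA_self, zero_div]

lemma one_le_abs_of_ne {r t : ℕ} (ht : t ≠ r) : (1:ℝ) ≤ |(t:ℝ) - (r:ℝ)| := by
  have h2 : (1:ℤ) ≤ |(t:ℤ) - (r:ℤ)| := Int.one_le_abs (sub_ne_zero.2 (by exact_mod_cast ht))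
  exact_mod_cast h2

lemma topOf_eq_coinduced (ρ : SpaceA X → SpaceA X → ℝ)
    (h0 : ∀ u, ρ u u = 0)
    (hcont : ∀ u n, Continuous fun x : X => ρ u (aMk x n))
    (hsep : ∀ (x : X) (r : ℕ) (δ : ℝ), 0 < δ → ∃ ε : ℝ, 0 < ε ∧
      ∀ v, ρ (aMk x r) v < ε → ∃ z, v = aMk z r ∧ dist x z < δ) :
    topOf ρ = TopologicalSpace.coinduced (Quotient.mk (ARel X))
      (@instTopologicalSpaceProd X ℕ inferInstance ⊥) := by
  refine le_antisymm ?_ (le_generateFrom ?_)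
  · rw [TopologicalSpace.le_def]
    intro U hU
    rw [isOpen_coinduced] at hU
    have slices : ∀ n : ℕ, IsOpen {x : X | aMk x n ∈ U} := by
      intro n
      have hc : @Continuous X (X × ℕ) _ (@instTopologicalSpaceProd X ℕ inferInstance ⊥)
          (fun x => (x, n)) :=
        @Continuous.prodMk _ _ _ _ ⊥ _ _ _ continuous_id continuous_const
      exact hc.isOpen_preimage _ hU
    have key : ∀ u ∈ U, ∃ ε : ℝ, 0 < ε ∧ {v | ρ u v < ε} ⊆ U := by
      intro u hu
      obtain ⟨⟨x₀, r⟩, rfl⟩ := Quotient.exists_rep u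
      obtain ⟨δ, hδ, hball⟩ := Metric.isOpen_iff.1 (slices r) x₀ hu
      obtain ⟨ε, hε, hs⟩ := hsep x₀ r δ hδ
      refine ⟨ε, hε, fun v hv => ?_⟩
      obtain ⟨z, rfl, hz⟩ := hs v hv
      exact hball (show z ∈ Metric.ball x₀ δ by rw [Metric.mem_ball, dist_comm]; exact hz)
    choose! ε hε hsub using key
    letI : TopologicalSpace (SpaceA X) := topOf ρ
    show IsOpen U
    have hU' : U = ⋃ u ∈ U, {v | ρ u v < ε u} := by
      ext v
      simp only [Set.mem_iUnion, Set.mem_setOf_eq, exists_prop]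
      exact ⟨fun hv => ⟨v, hv, by rw [h0 v]; exact hε v hv⟩,
        fun ⟨u, hu, hv⟩ => hsub u hu hv⟩
    rw [hU']
    exact isOpen_biUnion fun u _ => TopologicalSpace.GenerateOpen.basic _ ⟨u, ε u, rfl⟩
  · rintro s ⟨u, ε, rfl⟩
    rw [isOpen_coinduced]
    apply isOpen_prod_bot
    intro n
    exact isOpen_lt (hcont u n) continuous_const

lemma hsep_dA (M : ℝ) (hM : 0 < M) (x : X) (r : ℕ) (δ : ℝ) (hδ : 0 < δ) :
    ∃ ε : ℝ, 0 < ε ∧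
      ∀ v, dA M (aMk x r) v < ε → ∃ z, v = aMk z r ∧ dist x z < δ := by
  rcases Nat.eq_zero_or_pos r with hr | hr
  · subst hr
    refine ⟨M, hM, fun v hv => ?_⟩
    obtain ⟨⟨z, t⟩, rfl⟩ := Quotient.exists_rep v
    rw [show (Quotient.mk (ARel X) (z, t)) = aMk z t from rfl, dA_mk_mk] at hv
    rcases Nat.eq_zero_or_pos t with ht | ht
    · subst ht
      exact ⟨x, Quotient.sound (Or.inr ⟨rfl, rfl⟩), by simpa using hδ⟩
    · exfalso
      have h1 : (1:ℝ) ≤ |(t:ℝ) - (0:ℕ)| := one_le_abs_of_ne (by omega)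
      have h2 : (0:ℝ) ≤ ((min 0 t : ℕ) : ℝ) * dist x z := by positivity
      nlinarith
  · refine ⟨min M ((r:ℝ) * δ), by positivity, fun v hv => ?_⟩
    obtain ⟨⟨z, t⟩, rfl⟩ := Quotient.exists_rep v
    rw [show (Quotient.mk (ARel X) (z, t)) = aMk z t from rfl, dA_mk_mk] at hv
    by_cases ht : t = r
    · subst ht
      refine ⟨z, rfl, ?_⟩
      have e1 : ((min t t : ℕ) : ℝ) = (t:ℝ) := by simp
      rw [e1, sub_self, abs_zero, mul_zero, zero_add] at hv
      have h2 := (hv.trans_le (min_le_right _ _))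
      have ht' : (0:ℝ) < (t:ℝ) := by exact_mod_cast hr
      exact lt_of_mul_lt_mul_left (by linarith) ht'.le
    · exfalso
      have h1 : (1:ℝ) ≤ |(t:ℝ) - (r:ℝ)| := one_le_abs_of_ne ht
      have h2 : (0:ℝ) ≤ ((min r t : ℕ) : ℝ) * dist x z := by positivity
      have h3 := hv.trans_le (min_le_left _ _)
      nlinarith

lemma hsep_dAm (M : ℝ) (hM : 0 < M) (x : X) (r : ℕ) (δ : ℝ) (hδ : 0 < δ) :
    ∃ ε : ℝ, 0 < ε ∧
      ∀ v, dAm M (aMk x r) v < ε → ∃ z, v = aMk z r ∧ dist x z < δ := by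
  rcases Nat.eq_zero_or_pos r with hr | hr
  · subst hr
    refine ⟨M, hM, fun v hv => ?_⟩
    obtain ⟨⟨z, t⟩, rfl⟩ := Quotient.exists_rep v
    rw [show (Quotient.mk (ARel X) (z, t)) = aMk z t from rfl, dAm_mk_mk] at hv
    rcases Nat.eq_zero_or_pos t with ht | ht
    · subst ht
      exact ⟨x, Quotient.sound (Or.inr ⟨rfl, rfl⟩), by simpa using hδ⟩
    · exfalso
      have ht' : (0:ℝ) < (t:ℝ) := by exact_mod_cast ht
      have e1 : ((min 0 t : ℕ) : ℝ) = 0 := by simp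
      have e2 : ((max 0 t : ℕ) : ℝ) = (t:ℝ) := by simp
      have e3 : |(t:ℝ) - ((0:ℕ):ℝ)| = (t:ℝ) := by
        simp [abs_of_nonneg, ht'.le]
      rw [e1, e2, e3, zero_mul, add_zero, mul_div_assoc, div_self ht'.ne', mul_one] at hv
      exact lt_irrefl _ hv
  · have hr' : (0:ℝ) < (r:ℝ) := by exact_mod_cast hr
    refine ⟨min (M / ((r:ℝ) + 1)) δ, by positivity, fun v hv => ?_⟩
    obtain ⟨⟨z, t⟩, rfl⟩ := Quotient.exists_rep v
    rw [show (Quotient.mk (ARel X) (z, t)) = aMk z t from rfl, dAm_mk_mk] at hv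
    by_cases ht : t = r
    · subst ht
      refine ⟨z, rfl, ?_⟩
      have ht' : (0:ℝ) < (t:ℝ) := by exact_mod_cast hr
      have e1 : ((min t t : ℕ) : ℝ) = (t:ℝ) := by simp
      have e2 : ((max t t : ℕ) : ℝ) = (t:ℝ) := by simp
      rw [e1, e2, sub_self, abs_zero, mul_zero, zero_add,
        mul_comm, mul_div_assoc, div_self ht'.ne', mul_one] at hv
      exact hv.trans_le (min_le_right _ _)
    · exfalso
      have h1 : (1:ℝ) ≤ |(t:ℝ) - (r:ℝ)| := one_le_abs_of_ne ht
      have hmaxpos : (0:ℝ) < ((max r t : ℕ) : ℝ) := by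
        have : r ≤ max r t := le_max_left _ _
        have : (r:ℝ) ≤ ((max r t : ℕ) : ℝ) := by exact_mod_cast this
        linarith
      have hmin : (0:ℝ) ≤ ((min r t : ℕ) : ℝ) * dist x z := by positivity
      -- key : max r t ≤ |t - r| * (r + 1)
      have key : ((max r t : ℕ) : ℝ) ≤ |(t:ℝ) - (r:ℝ)| * ((r:ℝ) + 1) := by
        rcases lt_or_gt_of_ne ht with h | h
        · -- t < r, max = r
          have hm : ((max r t : ℕ) : ℝ) = (r:ℝ) := by
            rw [Nat.max_eq_left h.le]
          have habs : |(t:ℝ) - (r:ℝ)| = (r:ℝ) - t := by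
            rw [abs_sub_comm]
            exact abs_of_nonneg (sub_nonneg.2 (Nat.cast_le.2 h.le))
          rw [hm, habs]
          have htr : (t:ℝ) + 1 ≤ (r:ℝ) := by exact_mod_cast h
          nlinarith
        · -- t > r, max = t
          have hm : ((max r t : ℕ) : ℝ) = (t:ℝ) := by
            rw [Nat.max_eq_right h.le]
          have habs : |(t:ℝ) - (r:ℝ)| = (t:ℝ) - r := by
            exact abs_of_nonneg (sub_nonneg.2 (Nat.cast_le.2 h.le))
          rw [hm, habs]
          have htr : (r:ℝ) + 1 ≤ (t:ℝ) := by exact_mod_cast h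
          nlinarith
      have hlow : M / ((r:ℝ) + 1) ≤
          (M * |(t:ℝ) - (r:ℝ)| + ((min r t : ℕ) : ℝ) * dist x z) / ((max r t : ℕ) : ℝ) := by
        rw [div_le_div_iff₀ (by positivity) hmaxpos]
        nlinarith
      have := hv.trans_le (min_le_left _ _)
      linarith

end Aux


/-- For `d` bounded with `(sup d)/M ≤ 2`, `d_A` and `d_Am` induce the same topology
on `A`, which coincides with the quotient topology inherited from `X × ℕ` (with `X`
carrying its metric topology and `ℕ` the discrete topology `⊥`). -/
theorem stmt_12 {X : Type*} [MetricSpace X] [Nontrivial X] (M : ℝ) (hM : 0 < M)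
    (hbdd : ∃ B : ℝ, ∀ x y : X, dist x y ≤ B) (htheta : supD X / M ≤ 2) :
    topOf (dA (X := X) M) = topOf (dAm (X := X) M) ∧
    topOf (dA (X := X) M) =
      TopologicalSpace.coinduced (Quotient.mk (ARel X))
        (@instTopologicalSpaceProd X ℕ inferInstance ⊥) := by
  have h1 := topOf_eq_coinduced (dA (X := X) M) (dA_self M) (cont_dA M)
    (fun x r δ hδ => hsep_dA M hM x r δ hδ)
  have h2 := topOf_eq_coinduced (dAm (X := X) M) (dAm_self M) (cont_dAm M)
    (fun x r δ hδ => hsep_dAm M hM x r δ hδ)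
  exact ⟨h1.trans h2.symm, h1⟩
end
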